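/- arXiv:1811.06493 — 3 statements merged into one kernel-verified Lean document; each statement's English description precedes it below -/
import Mathlib

section
/- Product upper bound: For bounded sets E ⊆ ℝⁿ and F ⊆ ℝᵐ and θ ∈ [0,1], the upper θ-intermediate dimension of E × F is at most the upper θ-intermediate dimension of E plus the upper box dimension of F. -/
open Set

noncomputable section

/-- There is a countable cover of `F` by sets whose diameters all lie between `lo` and `hi`,
with `s`-power diameter sum at most `ε`. -/
def ICov {X : Type} [PseudoEMetricSpace X] (F : Set X) (s lo hi ε : ℝ) : Prop :=
  ∃ (ι : Type) (_ : Countable ι) (U : ι → Set X), F ⊆ ⋃ i, U i ∧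
    (∀ i, ENNReal.ofReal lo ≤ EMetric.diam (U i) ∧ EMetric.diam (U i) ≤ ENNReal.ofReal hi) ∧
    ∑' i, EMetric.diam (U i) ^ s ≤ ENNReal.ofReal ε

/-- There is a countable cover of `F` with no diameter restrictions and
`s`-power diameter sum at most `ε`. -/
def HCov {X : Type} [PseudoEMetricSpace X] (F : Set X) (s ε : ℝ) : Prop :=
  ∃ (ι : Type) (_ : Countable ι) (U : ι → Set X), F ⊆ ⋃ i, U i ∧
    ∑' i, EMetric.diam (U i) ^ s ≤ ENNReal.ofReal ε

/-- The lower `θ`-intermediate dimension. -/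
def lowerIDim {X : Type} [PseudoEMetricSpace X] (F : Set X) (θ : ℝ) : ℝ :=
  if θ = 0 then sInf {s : ℝ | 0 ≤ s ∧ ∀ ε > 0, HCov F s ε}
  else sInf {s : ℝ | 0 ≤ s ∧ ∀ ε > 0, ∀ δ₀ > 0, ∃ δ : ℝ, 0 < δ ∧ δ ≤ δ₀ ∧
    ICov F s (δ ^ (1 / θ)) δ ε}

/-- The upper `θ`-intermediate dimension. -/
def upperIDim {X : Type} [PseudoEMetricSpace X] (F : Set X) (θ : ℝ) : ℝ :=
  if θ = 0 then sInf {s : ℝ | 0 ≤ s ∧ ∀ ε > 0, HCov F s ε}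
  else sInf {s : ℝ | 0 ≤ s ∧ ∀ ε > 0, ∃ δ₀ > (0:ℝ), ∀ δ : ℝ, 0 < δ → δ ≤ δ₀ →
    ICov F s (δ ^ (1 / θ)) δ ε}

/-- A countable cover of `F` by sets all of diameter exactly `δ`,
with `s`-power diameter sum at most `ε`. -/
def EqCov {X : Type} [PseudoEMetricSpace X] (F : Set X) (s δ ε : ℝ) : Prop :=
  ∃ (ι : Type) (_ : Countable ι) (U : ι → Set X), F ⊆ ⋃ i, U i ∧
    (∀ i, EMetric.diam (U i) = ENNReal.ofReal δ) ∧
    ∑' i, EMetric.diam (U i) ^ s ≤ ENNReal.ofReal ε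

/-- The lower box dimension. -/
def lowerBoxDim {X : Type} [PseudoEMetricSpace X] (F : Set X) : ℝ :=
  sInf {s : ℝ | 0 ≤ s ∧ ∀ ε > 0, ∀ δ₀ > 0, ∃ δ : ℝ, 0 < δ ∧ δ ≤ δ₀ ∧ EqCov F s δ ε}

/-- The upper box dimension. -/
def upperBoxDim {X : Type} [PseudoEMetricSpace X] (F : Set X) : ℝ :=
  sInf {s : ℝ | 0 ≤ s ∧ ∀ ε > 0, ∃ δ₀ > (0:ℝ), ∀ δ : ℝ, 0 < δ → δ ≤ δ₀ → EqCov F s δ ε}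

/-- The Assouad dimension. -/
def assouadDim {X : Type} [PseudoEMetricSpace X] (F : Set X) : ℝ :=
  sInf {s : ℝ | 0 ≤ s ∧ ∃ C > (0:ℝ), ∀ x ∈ F, ∀ r R : ℝ, 0 < r → r < R →
    ∃ t : Finset (Set X), (F ∩ EMetric.closedBall x (ENNReal.ofReal R) ⊆ ⋃ U ∈ t, U) ∧
      (∀ U ∈ t, EMetric.diam U ≤ ENNReal.ofReal r) ∧ (t.card : ℝ) ≤ C * (R / r) ^ s}

end

/-!
In the `L²` product the diameter of `A × B` is exactly `√(diam A ^ 2 + diam B ^ 2)`. Cover `E` by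
sets `U i` with `(δ / √2)^(1/θ) ≤ diam (U i) = d i ≤ δ / √2`, and cover `F` by sets `V i j` of
diameter `r i`, where `r i` is chosen so that `√(d i ^ 2 + r i ^ 2) = max (√2 * d i) (δ^(1/θ))`.
The products `U i × V i j` are then admissible at scale `δ`, and their diameter is at most a
constant times both `d i` and `r i`, so the `(s + t)`-sum over them is at most a constant times
`(∑ i, d i ^ s) * (sup over i of ∑ j, r i ^ t)`. For `θ = 0` the radii need only be positive,
which `r i ^ s = max (d i ^ s) (η i)` with a small summable `η` achieves. A grid of cubes shows
that a bounded subset of `ℝ^m` has `m + 1` as a box exponent, so the infima are over nonempty sets.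
-/

open Metric
open scoped ENNReal Pointwise

lemma ENNReal.rpow_add_le_mul_rpow_mul_rpow {D a b x y : ℝ≥0∞} {s t : ℝ} (hs : 0 ≤ s) (ht : 0 ≤ t)
    (hx : D ≤ a * x) (hy : D ≤ b * y) : D ^ (s + t) ≤ a ^ s * b ^ t * x ^ s * y ^ t := by
  calc D ^ (s + t) = D ^ s * D ^ t := ENNReal.rpow_add_of_nonneg _ _ hs ht
    _ ≤ (a * x) ^ s * (b * y) ^ t := by gcongr
    _ = a ^ s * b ^ t * x ^ s * y ^ t := by
      rw [ENNReal.mul_rpow_of_nonneg _ _ hs, ENNReal.mul_rpow_of_nonneg _ _ ht]; ring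

lemma ENNReal.ofReal_div_toReal_mul_le {K c : ℝ≥0∞} (ε : ℝ) (hK₀ : K ≠ 0) (hK : K ≠ ⊤)
    (hc : c ≤ K) : ENNReal.ofReal (ε / K.toReal) * c ≤ ENNReal.ofReal ε := by
  rw [ENNReal.ofReal_div_of_pos (ENNReal.toReal_pos hK₀ hK), ENNReal.ofReal_toReal hK]
  calc ENNReal.ofReal ε / K * c ≤ ENNReal.ofReal ε / K * K := by gcongr
    _ = ENNReal.ofReal ε := ENNReal.div_mul_cancel hK₀ hK

lemma exists_pos_radii_of_tsum_rpow_le {ι : Type*} [Countable ι] {d : ι → ℝ≥0∞} {s β : ℝ}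
    (hs : 0 < s) (hβ : 0 < β) (hd : ∑' i, d i ^ s ≤ ENNReal.ofReal β ^ s) :
    ∃ r : ι → ℝ, (∀ i, 0 < r i ∧ r i ≤ β ∧ d i ≤ ENNReal.ofReal (r i)) ∧
      ∑' i, ENNReal.ofReal (r i) ^ s ≤ 2 * ENNReal.ofReal β ^ s := by
  have hβs : ENNReal.ofReal β ^ s ≠ ⊤ := ENNReal.rpow_ne_top_of_nonneg hs.le ENNReal.ofReal_ne_top
  obtain ⟨η, hη₀, hη⟩ := ENNReal.exists_pos_sum_of_countable
    (ENNReal.rpow_pos (ENNReal.ofReal_pos.2 hβ) ENNReal.ofReal_ne_top).ne' ι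
  set a : ι → ℝ≥0∞ := fun i => max (d i ^ s) (η i)
  have ha : ∀ i, a i ≤ ENNReal.ofReal β ^ s := fun i =>
    max_le ((ENNReal.le_tsum i).trans hd) ((ENNReal.le_tsum i).trans hη.le)
  have ha_top : ∀ i, a i ^ s⁻¹ ≠ ⊤ := fun i =>
    ENNReal.rpow_ne_top_of_nonneg (by positivity) (ne_top_of_le_ne_top hβs (ha i))
  have hra : ∀ i, ENNReal.ofReal (a i ^ s⁻¹).toReal ^ s = a i := fun i => by
    rw [ENNReal.ofReal_toReal (ha_top i), ← ENNReal.rpow_mul, inv_mul_cancel₀ hs.ne',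
      ENNReal.rpow_one]
  refine ⟨fun i => (a i ^ s⁻¹).toReal, fun i => ⟨?_, ?_, ?_⟩, ?_⟩
  · refine ENNReal.toReal_pos (ENNReal.rpow_pos ?_ ?_).ne' (ha_top i)
    · exact lt_max_of_lt_right (by exact_mod_cast hη₀ i)
    · exact ne_top_of_le_ne_top hβs (ha i)
  · rw [← ENNReal.ofReal_le_ofReal_iff hβ.le, ← ENNReal.rpow_le_rpow_iff hs, hra]
    exact ha i
  · rw [← ENNReal.rpow_le_rpow_iff hs, hra]
    exact le_max_left _ _
  · calc ∑' i, ENNReal.ofReal (a i ^ s⁻¹).toReal ^ s = ∑' i, a i := by simp only [hra]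
      _ ≤ ∑' i, (d i ^ s + η i) :=
          ENNReal.tsum_le_tsum fun i => max_le_add_of_nonneg zero_le zero_le
      _ = ∑' i, d i ^ s + ∑' i, (η i : ℝ≥0∞) := ENNReal.tsum_add
      _ ≤ 2 * ENNReal.ofReal β ^ s := by rw [two_mul]; exact add_le_add hd hη.le

lemma exists_scale_hypot_mem_Icc {θ δ d : ℝ} (hθ₀ : 0 < θ) (hθ₁ : θ ≤ 1) (hδ₀ : 0 < δ) (hδ₁ : δ ≤ 1)
    (hd₀ : (δ / √2) ^ (1 / θ) ≤ d) (hd₁ : d ≤ δ / √2) :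
    ∃ r, 0 < r ∧ r ≤ δ ∧ δ ^ (1 / θ) ≤ √(d ^ 2 + r ^ 2) ∧ √(d ^ 2 + r ^ 2) ≤ δ ∧
      √(d ^ 2 + r ^ 2) ≤ √2 * r ∧ √(d ^ 2 + r ^ 2) ≤ √2 ^ (1 / θ) * d := by
  have hθ : 1 ≤ 1 / θ := (one_le_div hθ₀).2 hθ₁
  have hd : 0 < d := (by positivity : 0 < (δ / √2) ^ (1 / θ)).trans_le hd₀
  have hsq2 : √2 ^ 2 = 2 := Real.sq_sqrt zero_le_two
  set M := max (√2 * d) (δ ^ (1 / θ))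
  have hM₀ : 0 ≤ M := (by positivity : 0 ≤ √2 * d).trans (le_max_left _ _)
  have hdM : 2 * d ^ 2 ≤ M ^ 2 := by
    rw [← hsq2, ← mul_pow]
    exact pow_le_pow_left₀ (by positivity) (le_max_left _ _) 2
  have hr : √(M ^ 2 - d ^ 2) ^ 2 = M ^ 2 - d ^ 2 := Real.sq_sqrt (by nlinarith)
  have hhyp : √(d ^ 2 + √(M ^ 2 - d ^ 2) ^ 2) = M := by
    rw [hr, add_sub_cancel, Real.sqrt_sq hM₀]
  have hMδ : M ≤ δ := by
    refine max_le (by rwa [le_div_iff₀ (by positivity), mul_comm] at hd₁) ?_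
    simpa using Real.rpow_le_rpow_of_exponent_ge hδ₀ hδ₁ hθ
  refine ⟨√(M ^ 2 - d ^ 2), Real.sqrt_pos.2 (by nlinarith), ?_, ?_⟩
  · calc √(M ^ 2 - d ^ 2) ≤ √(M ^ 2) := Real.sqrt_le_sqrt (by nlinarith)
      _ = M := Real.sqrt_sq hM₀
      _ ≤ δ := hMδ
  rw [hhyp]
  refine ⟨le_max_right _ _, hMδ, ?_, max_le ?_ ?_⟩
  · refine (pow_le_pow_iff_left₀ hM₀ (by positivity) two_ne_zero).1 ?_
    rw [mul_pow, hsq2, hr]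
    linarith
  · gcongr
    simpa using Real.rpow_le_rpow_of_exponent_le (Real.one_le_sqrt.2 one_le_two) hθ
  · calc δ ^ (1 / θ) = √2 ^ (1 / θ) * (δ / √2) ^ (1 / θ) := by
          rw [← Real.mul_rpow (by positivity) (by positivity), mul_div_cancel₀ _ (by positivity)]
      _ ≤ √2 ^ (1 / θ) * d := by gcongr

lemma sInf_le_sInf_add_sInf {R S T : Set ℝ} (hR : BddBelow R) (hS : S.Nonempty) (hS' : BddBelow S)
    (hT : T.Nonempty) (hT' : BddBelow T) (h : S + T ⊆ R) : sInf R ≤ sInf S + sInf T := by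
  rw [← csInf_add hS hS' hT hT']
  exact csInf_le_csInf hR (hS.add hT) h

section ProductDiameter

variable {X Y : Type*} [PseudoEMetricSpace X] [PseudoEMetricSpace Y]

lemma WithLp.prod_edist_sq (z w : WithLp 2 (X × Y)) :
    edist z w ^ 2 = edist z.fst w.fst ^ 2 + edist z.snd w.snd ^ 2 := by
  rw [WithLp.prod_edist_eq_add (by simp), ← ENNReal.rpow_natCast, ← ENNReal.rpow_mul]
  norm_num

lemma ediam_sq_eq_biSup (A : Set X) : ediam A ^ 2 = ⨆ p ∈ A ×ˢ A, edist p.1 p.2 ^ 2 := by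
  simp only [ediam, ENNReal.iSup_pow_of_ne_zero two_ne_zero, biSup_prod]

lemma ediam_preimage_ofLp_prod_sq_le (A : Set X) (B : Set Y) :
    ediam (WithLp.ofLp ⁻¹' A ×ˢ B : Set (WithLp 2 (X × Y))) ^ 2 ≤ ediam A ^ 2 + ediam B ^ 2 := by
  simp only [ediam_sq_eq_biSup (WithLp.ofLp ⁻¹' _), iSup₂_le_iff]
  rintro ⟨z, w⟩ ⟨⟨hz₁, hz₂⟩, hw₁, hw₂⟩
  rw [WithLp.prod_edist_sq]
  gcongr <;> exact edist_le_ediam_of_mem ‹_› ‹_›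

lemma ediam_preimage_ofLp_prod_sq {A : Set X} {B : Set Y} (hA : A.Nonempty) (hB : B.Nonempty) :
    ediam (WithLp.ofLp ⁻¹' A ×ˢ B : Set (WithLp 2 (X × Y))) ^ 2 = ediam A ^ 2 + ediam B ^ 2 := by
  refine (ediam_preimage_ofLp_prod_sq_le A B).antisymm ?_
  rw [ediam_sq_eq_biSup A, ediam_sq_eq_biSup B]
  refine ENNReal.biSup_add_biSup_le (hA.prod hA) (hB.prod hB) fun p hp q hq => ?_
  calc edist p.1 p.2 ^ 2 + edist q.1 q.2 ^ 2
      = edist (WithLp.toLp 2 (p.1, q.1)) (WithLp.toLp 2 (p.2, q.2)) ^ 2 :=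
        (WithLp.prod_edist_sq (WithLp.toLp 2 (p.1, q.1)) (WithLp.toLp 2 (p.2, q.2))).symm
    _ ≤ _ := by gcongr; exact edist_le_ediam_of_mem ⟨hp.1, hq.1⟩ ⟨hp.2, hq.2⟩

lemma nonempty_of_ediam_eq_ofReal {A : Set X} {a : ℝ} (ha : 0 < a)
    (hA : ediam A = ENNReal.ofReal a) : A.Nonempty :=
  nonempty_iff_ne_empty.2 fun h => (ENNReal.ofReal_pos.2 ha).ne' (by rw [← hA, h, ediam_empty])

lemma ediam_preimage_ofLp_prod_eq_ofReal {A : Set X} {B : Set Y} {a b : ℝ} (ha : 0 < a) (hb : 0 < b)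
    (hA : ediam A = ENNReal.ofReal a) (hB : ediam B = ENNReal.ofReal b) :
    ediam (WithLp.ofLp ⁻¹' A ×ˢ B : Set (WithLp 2 (X × Y))) = ENNReal.ofReal √(a ^ 2 + b ^ 2) := by
  refine (ENNReal.pow_right_strictMono two_ne_zero).injective ?_
  rw [ediam_preimage_ofLp_prod_sq (nonempty_of_ediam_eq_ofReal ha hA)
      (nonempty_of_ediam_eq_ofReal hb hB), hA, hB, ← ENNReal.ofReal_pow ha.le,
    ← ENNReal.ofReal_pow hb.le, ← ENNReal.ofReal_add (by positivity) (by positivity),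
    ← ENNReal.ofReal_pow (Real.sqrt_nonneg _), Real.sq_sqrt (by positivity)]

lemma ediam_preimage_ofLp_prod_le {A : Set X} {B : Set Y} {r : ℝ}
    (hA : ediam A ≤ ENNReal.ofReal r) (hB : ediam B ≤ ENNReal.ofReal r) :
    ediam (WithLp.ofLp ⁻¹' A ×ˢ B : Set (WithLp 2 (X × Y))) ≤
      ENNReal.ofReal √2 * ENNReal.ofReal r := by
  rw [← ENNReal.pow_le_pow_left_iff two_ne_zero, mul_pow, ← ENNReal.ofReal_pow (Real.sqrt_nonneg _),
    Real.sq_sqrt zero_le_two, ENNReal.ofReal_ofNat, two_mul]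
  exact (ediam_preimage_ofLp_prod_sq_le A B).trans (by gcongr)

lemma exists_ediam_eq_ofReal {A : Set X} {lo hi : ℝ}
    (hhi : 0 ≤ hi) (h : ENNReal.ofReal lo ≤ ediam A ∧ ediam A ≤ ENNReal.ofReal hi) :
    ∃ d, ediam A = ENNReal.ofReal d ∧ lo ≤ d ∧ d ≤ hi := by
  have hA : ediam A ≠ ⊤ := ne_top_of_le_ne_top ENNReal.ofReal_ne_top h.2
  exact ⟨(ediam A).toReal, (ENNReal.ofReal_toReal hA).symm,
    (ENNReal.ofReal_le_iff_le_toReal hA).1 h.1, ENNReal.toReal_le_of_le_ofReal hhi h.2⟩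

end ProductDiameter

section Exponents

variable {X Z : Type} [PseudoEMetricSpace X] [PseudoEMetricSpace Z]

/- `ICov`, `HCov` and `EqCov` are phrased with the deprecated alias `EMetric.diam`; restating them
with `ediam` lets the `ediam` lemmas rewrite inside them. -/
lemma iCov_iff {G : Set X} {s lo hi ε : ℝ} :
    ICov G s lo hi ε ↔ ∃ (ι : Type) (_ : Countable ι) (U : ι → Set X), G ⊆ ⋃ i, U i ∧
      (∀ i, ENNReal.ofReal lo ≤ ediam (U i) ∧ ediam (U i) ≤ ENNReal.ofReal hi) ∧
      ∑' i, ediam (U i) ^ s ≤ ENNReal.ofReal ε :=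
  Iff.rfl

lemma hCov_iff {G : Set X} {s ε : ℝ} :
    HCov G s ε ↔ ∃ (ι : Type) (_ : Countable ι) (U : ι → Set X), G ⊆ ⋃ i, U i ∧
      ∑' i, ediam (U i) ^ s ≤ ENNReal.ofReal ε :=
  Iff.rfl

lemma eqCov_iff {G : Set X} {s δ ε : ℝ} :
    EqCov G s δ ε ↔ ∃ (ι : Type) (_ : Countable ι) (U : ι → Set X), G ⊆ ⋃ i, U i ∧
      (∀ i, ediam (U i) = ENNReal.ofReal δ) ∧ ∑' i, ediam (U i) ^ s ≤ ENNReal.ofReal ε :=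
  Iff.rfl

lemma ICov.image {G : Set X} {s lo hi ε : ℝ} (h : ICov G s lo hi ε) {f : X → Z} (hf : Isometry f) :
    ICov (f '' G) s lo hi ε := by
  obtain ⟨ι, hι, U, hU, hdiam, hsum⟩ := iCov_iff.1 h
  exact iCov_iff.2 ⟨ι, hι, (f '' U ·), (image_mono hU).trans image_iUnion.subset,
    by simpa only [hf.ediam_image] using hdiam, by simpa only [hf.ediam_image] using hsum⟩

lemma HCov.image {G : Set X} {s ε : ℝ} (h : HCov G s ε) {f : X → Z} (hf : Isometry f) :
    HCov (f '' G) s ε := by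
  obtain ⟨ι, hι, U, hU, hsum⟩ := hCov_iff.1 h
  exact hCov_iff.2 ⟨ι, hι, (f '' U ·), (image_mono hU).trans image_iUnion.subset,
    by simpa only [hf.ediam_image] using hsum⟩

def hausdorffExponents (G : Set X) : Set ℝ :=
  {s | 0 ≤ s ∧ ∀ ε > 0, HCov G s ε}

def upperIDimExponents (G : Set X) (θ : ℝ) : Set ℝ :=
  {s | 0 ≤ s ∧ ∀ ε > 0, ∃ δ₀ > (0:ℝ), ∀ δ : ℝ, 0 < δ → δ ≤ δ₀ → ICov G s (δ ^ (1 / θ)) δ ε}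

def upperBoxExponents (G : Set X) : Set ℝ :=
  {s | 0 ≤ s ∧ ∀ ε > 0, ∃ δ₀ > (0:ℝ), ∀ δ : ℝ, 0 < δ → δ ≤ δ₀ → EqCov G s δ ε}

lemma upperIDim_zero (G : Set X) : upperIDim G 0 = sInf (hausdorffExponents G) := if_pos rfl

lemma upperIDim_of_ne_zero (G : Set X) {θ : ℝ} (hθ : θ ≠ 0) :
    upperIDim G θ = sInf (upperIDimExponents G θ) :=
  if_neg hθ

lemma upperBoxDim_eq_sInf (G : Set X) : upperBoxDim G = sInf (upperBoxExponents G) := rfl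

lemma bddBelow_hausdorffExponents (G : Set X) : BddBelow (hausdorffExponents G) :=
  ⟨0, fun _ hs => hs.1⟩

lemma bddBelow_upperIDimExponents (G : Set X) (θ : ℝ) : BddBelow (upperIDimExponents G θ) :=
  ⟨0, fun _ hs => hs.1⟩

lemma bddBelow_upperBoxExponents (G : Set X) : BddBelow (upperBoxExponents G) :=
  ⟨0, fun _ hs => hs.1⟩

lemma upperIDim_nonneg (G : Set X) (θ : ℝ) : 0 ≤ upperIDim G θ := by
  unfold upperIDim
  split_ifs <;> exact Real.sInf_nonneg fun _ hs => hs.1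

lemma upperBoxDim_nonneg (G : Set X) : 0 ≤ upperBoxDim G :=
  Real.sInf_nonneg fun _ hs => hs.1

lemma upperIDim_empty (θ : ℝ) : upperIDim (∅ : Set X) θ = 0 := by
  refine le_antisymm ?_ (upperIDim_nonneg _ _)
  rcases eq_or_ne θ 0 with rfl | hθ
  · rw [upperIDim_zero]
    exact csInf_le (bddBelow_hausdorffExponents _) ⟨le_rfl, fun ε _ =>
      hCov_iff.2 ⟨Empty, inferInstance, Empty.elim, empty_subset _, by simp⟩⟩
  · rw [upperIDim_of_ne_zero _ hθ]
    exact csInf_le (bddBelow_upperIDimExponents _ _) ⟨le_rfl, fun ε _ => ⟨1, one_pos, fun δ _ _ =>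
      iCov_iff.2 ⟨Empty, inferInstance, Empty.elim, empty_subset _, Empty.rec, by simp⟩⟩⟩

lemma hausdorffExponents_subset_image (G : Set X) {f : X → Z} (hf : Isometry f) :
    hausdorffExponents G ⊆ hausdorffExponents (f '' G) :=
  fun _ ⟨hs, h⟩ => ⟨hs, fun ε hε => (h ε hε).image hf⟩

lemma upperIDimExponents_subset_image (G : Set X) (θ : ℝ) {f : X → Z} (hf : Isometry f) :
    upperIDimExponents G θ ⊆ upperIDimExponents (f '' G) θ := by
  rintro s ⟨hs, h⟩
  refine ⟨hs, fun ε hε => ?_⟩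
  obtain ⟨δ₀, hδ₀, hcov⟩ := h ε hε
  exact ⟨δ₀, hδ₀, fun δ hδ hδδ₀ => (hcov δ hδ hδδ₀).image hf⟩

lemma upperIDim_image_isometryEquiv (e : X ≃ᵢ Z) (G : Set X) (θ : ℝ) :
    upperIDim (e '' G) θ = upperIDim G θ := by
  have hG : e.symm '' (e '' G) = G := e.symm_image_image G
  rcases eq_or_ne θ 0 with rfl | hθ
  · rw [upperIDim_zero, upperIDim_zero]
    refine congrArg sInf (Subset.antisymm ?_ (hausdorffExponents_subset_image G e.isometry))
    simpa only [hG] using hausdorffExponents_subset_image (e '' G) e.symm.isometry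
  · rw [upperIDim_of_ne_zero _ hθ, upperIDim_of_ne_zero _ hθ]
    refine congrArg sInf (Subset.antisymm ?_ (upperIDimExponents_subset_image G θ e.isometry))
    simpa only [hG] using upperIDimExponents_subset_image (e '' G) θ e.symm.isometry

lemma upperBoxExponents_subset_hausdorffExponents (G : Set X) :
    upperBoxExponents G ⊆ hausdorffExponents G := by
  rintro s ⟨hs, h⟩
  refine ⟨hs, fun ε hε => ?_⟩
  obtain ⟨δ₀, hδ₀, hcov⟩ := h ε hε
  obtain ⟨ι, hι, U, hU, -, hsum⟩ := eqCov_iff.1 (hcov δ₀ hδ₀ le_rfl)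
  exact hCov_iff.2 ⟨ι, hι, U, hU, hsum⟩

lemma upperBoxExponents_subset_upperIDimExponents (G : Set X) {θ : ℝ} (hθ₀ : 0 < θ) (hθ₁ : θ ≤ 1) :
    upperBoxExponents G ⊆ upperIDimExponents G θ := by
  rintro s ⟨hs, h⟩
  refine ⟨hs, fun ε hε => ?_⟩
  obtain ⟨δ₀, hδ₀, hcov⟩ := h ε hε
  refine ⟨min δ₀ 1, by positivity, fun δ hδ hδle => ?_⟩
  obtain ⟨ι, hι, U, hU, hdiam, hsum⟩ := eqCov_iff.1 (hcov δ hδ (hδle.trans (min_le_left _ _)))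
  have hlo : δ ^ (1 / θ) ≤ δ := by
    simpa using Real.rpow_le_rpow_of_exponent_ge hδ (hδle.trans (min_le_right _ _))
      ((one_le_div hθ₀).2 hθ₁)
  exact iCov_iff.2 ⟨ι, hι, U, hU, fun i => ⟨(hdiam i).symm ▸ ENNReal.ofReal_le_ofReal hlo,
    (hdiam i).le⟩, hsum⟩

lemma upperIDim_le_upperBoxDim {G : Set X} (hG : (upperBoxExponents G).Nonempty) {θ : ℝ}
    (hθ : θ ∈ Icc (0 : ℝ) 1) : upperIDim G θ ≤ upperBoxDim G := by
  rcases hθ.1.eq_or_lt with rfl | hθ₀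
  · rw [upperIDim_zero]
    exact csInf_le_csInf (bddBelow_hausdorffExponents G) hG
      (upperBoxExponents_subset_hausdorffExponents G)
  · rw [upperIDim_of_ne_zero _ hθ₀.ne']
    exact csInf_le_csInf (bddBelow_upperIDimExponents G θ) hG
      (upperBoxExponents_subset_upperIDimExponents G hθ₀ hθ.2)

end Exponents

section Cubes

variable {m : ℕ}

def euclideanCube (c : EuclideanSpace ℝ (Fin m)) (a : ℝ) : Set (EuclideanSpace ℝ (Fin m)) :=
  {x | ∀ j, x j ∈ Icc (c j) (c j + a)}

lemma ediam_euclideanCube (c : EuclideanSpace ℝ (Fin m)) {a : ℝ} (ha : 0 ≤ a) :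
    ediam (euclideanCube c a) = ENNReal.ofReal (√m * a) := by
  have hsum : √(∑ _j : Fin m, a ^ 2) = √m * a := by
    rw [Finset.sum_const, Finset.card_univ, Fintype.card_fin, nsmul_eq_mul,
      Real.sqrt_mul (Nat.cast_nonneg m), Real.sqrt_sq ha]
  refine le_antisymm (ediam_le fun x hx y hy => ?_) ?_
  · rw [edist_dist, EuclideanSpace.dist_eq, ← hsum]
    gcongr with j
    obtain ⟨⟨hx₁, hx₂⟩, hy₁, hy₂⟩ := And.intro (hx j) (hy j)
    exact abs_sub_le_iff.2 ⟨by linarith, by linarith⟩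
  · set y : EuclideanSpace ℝ (Fin m) := WithLp.toLp 2 fun j => c j + a
    have hc : c ∈ euclideanCube c a := fun j => ⟨le_rfl, by linarith⟩
    have hy : y ∈ euclideanCube c a := fun j => ⟨by simp [y, ha], le_rfl⟩
    calc ENNReal.ofReal (√m * a) = edist c y := by
          simp [edist_dist, EuclideanSpace.dist_eq, ← hsum, y]
      _ ≤ _ := edist_le_ediam_of_mem hc hy

lemma subset_iUnion_euclideanCube {F : Set (EuclideanSpace ℝ (Fin m))} {R a : ℝ} (ha : 0 < a)
    (hF : F ⊆ closedBall 0 R) :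
    F ⊆ ⋃ k : Fin m → Finset.Icc (-⌈R / a⌉₊ : ℤ) ⌈R / a⌉₊,
      euclideanCube (WithLp.toLp 2 fun j => (k j : ℤ) * a) a := by
  intro x hx
  have hxR : ∀ j, |x j| ≤ R := fun j =>
    (PiLp.norm_apply_le x j).trans (mem_closedBall_zero_iff.1 (hF hx))
  have hRK : R / a ≤ ⌈R / a⌉₊ := Nat.le_ceil _
  refine mem_iUnion.2 ⟨fun j => ⟨⌊x j / a⌋, Finset.mem_Icc.2 ⟨?_, ?_⟩⟩, fun j => ⟨?_, ?_⟩⟩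
  · refine Int.le_floor.2 ?_
    rw [le_div_iff₀ ha]
    push_cast
    nlinarith [(abs_le.1 (hxR j)).1, (div_le_iff₀ ha).1 hRK]
  · refine Int.floor_le_iff.2 ?_
    rw [div_lt_iff₀ ha]
    push_cast
    nlinarith [(abs_le.1 (hxR j)).2, (div_le_iff₀ ha).1 hRK]
  · simpa using (le_div_iff₀ ha).1 (Int.floor_le (x j / a))
  · have := (div_le_iff₀ ha).1 (Int.lt_floor_add_one (x j / a)).le
    dsimp only
    linarith

lemma add_one_mem_upperBoxExponents (hm : 0 < m) {F : Set (EuclideanSpace ℝ (Fin m))}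
    (hF : Bornology.IsBounded F) : (m + 1 : ℝ) ∈ upperBoxExponents F := by
  obtain ⟨R, hR, hFR⟩ := hF.subset_closedBall_lt 0 0
  refine ⟨by positivity, fun ε hε => ?_⟩
  set C := 2 * R * √m + 3
  have hsm : 0 < √m := Real.sqrt_pos.2 (by exact_mod_cast hm)
  refine ⟨min 1 (ε / C ^ m), by positivity, fun δ hδ hδle => ?_⟩
  simp only [le_min_iff] at hδle
  have ha : 0 < δ / √m := by positivity
  have hdiam (c : EuclideanSpace ℝ (Fin m)) :
      ediam (euclideanCube c (δ / √m)) = ENNReal.ofReal δ := by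
    rw [ediam_euclideanCube c ha.le, mul_div_cancel₀ _ hsm.ne']
  refine eqCov_iff.2 ⟨_, inferInstance, _, subset_iUnion_euclideanCube ha hFR, fun k => hdiam _, ?_⟩
  obtain ⟨K, hK⟩ : ∃ K : ℕ, K = ⌈R / (δ / √m)⌉₊ := ⟨_, rfl⟩
  have hKC : (2 * K + 1) * δ ≤ C := by
    have hK : (K : ℝ) < R / (δ / √m) + 1 := hK ▸ Nat.ceil_lt_add_one (by positivity)
    rw [div_div_eq_mul_div, div_add_one hδ.ne', lt_div_iff₀ hδ] at hK
    nlinarith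
  have hcard : ((K : ℤ) + 1 - -(K : ℤ)).toNat = 2 * K + 1 := by omega
  simp only [hdiam, tsum_fintype, Finset.sum_const, Finset.card_univ, Fintype.card_fun,
    Fintype.card_coe, Int.card_Icc, Fintype.card_fin, nsmul_eq_mul, ← hK, hcard]
  rw [← ENNReal.ofReal_natCast, ENNReal.ofReal_rpow_of_nonneg hδ.le (by positivity),
    ← ENNReal.ofReal_mul (Nat.cast_nonneg _)]
  refine ENNReal.ofReal_le_ofReal ?_
  rw [show (m : ℝ) + 1 = ((m + 1 : ℕ) : ℝ) by push_cast; ring, Real.rpow_natCast]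
  push_cast
  calc (2 * K + 1 : ℝ) ^ m * δ ^ (m + 1) = ((2 * K + 1) * δ) ^ m * δ := by
        rw [mul_pow, pow_succ]; ring
    _ ≤ C ^ m * (ε / C ^ m) := by gcongr; exact hδle.2
    _ = ε := mul_div_cancel₀ _ (by positivity)

end Cubes

section Product

variable {X Y : Type} [PseudoEMetricSpace X] [PseudoEMetricSpace Y]

lemma exists_cover_preimage_ofLp_prod {E : Set X} {F : Set Y} {ι : Type} [Countable ι]
    {U : ι → Set X} (hU : E ⊆ ⋃ i, U i) {r : ι → ℝ} {s t η : ℝ} (hF : ∀ i, EqCov F t (r i) η)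
    (w : ι → ℝ≥0∞) (P : Set (WithLp 2 (X × Y)) → Prop)
    (hP : ∀ i (V : Set Y), ediam V = ENNReal.ofReal (r i) →
      P (WithLp.ofLp ⁻¹' U i ×ˢ V) ∧
        ediam (WithLp.ofLp ⁻¹' U i ×ˢ V : Set (WithLp 2 (X × Y))) ^ (s + t) ≤ w i * ediam V ^ t) :
    ∃ (κ : Type) (_ : Countable κ) (W : κ → Set (WithLp 2 (X × Y))),
      WithLp.ofLp ⁻¹' E ×ˢ F ⊆ ⋃ k, W k ∧ (∀ k, P (W k)) ∧
        ∑' k, ediam (W k) ^ (s + t) ≤ ENNReal.ofReal η * ∑' i, w i := by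
  choose κ hκ V hV hVdiam hVsum using fun i => eqCov_iff.1 (hF i)
  refine ⟨Σ i, κ i, inferInstance, fun k => WithLp.ofLp ⁻¹' U k.1 ×ˢ V k.1 k.2, ?_,
    fun k => (hP _ _ (hVdiam _ _)).1, ?_⟩
  · rintro z ⟨hz₁, hz₂⟩
    obtain ⟨i, hi⟩ := mem_iUnion.1 (hU hz₁)
    obtain ⟨j, hj⟩ := mem_iUnion.1 (hV i hz₂)
    exact mem_iUnion.2 ⟨⟨i, j⟩, hi, hj⟩
  · calc ∑' k : Σ i, κ i,
          ediam (WithLp.ofLp ⁻¹' U k.1 ×ˢ V k.1 k.2 : Set (WithLp 2 (X × Y))) ^ (s + t)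
        ≤ ∑' i, w i * ∑' j, ediam (V i j) ^ t := by
          rw [ENNReal.tsum_sigma']
          gcongr with i
          rw [← ENNReal.tsum_mul_left]
          exact ENNReal.tsum_le_tsum fun j => (hP _ _ (hVdiam i j)).2
      _ ≤ ∑' i, w i * ENNReal.ofReal η := by gcongr with i; exact hVsum i
      _ = ENNReal.ofReal η * ∑' i, w i := by rw [ENNReal.tsum_mul_right, mul_comm]

lemma add_mem_upperIDimExponents_preimage_ofLp_prod {E : Set X} {F : Set Y} {θ s t : ℝ}
    (hθ₀ : 0 < θ) (hθ₁ : θ ≤ 1) (hs : s ∈ upperIDimExponents E θ) (ht : t ∈ upperBoxExponents F) :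
    s + t ∈ upperIDimExponents (WithLp.ofLp ⁻¹' E ×ˢ F : Set (WithLp 2 (X × Y))) θ := by
  refine ⟨add_nonneg hs.1 ht.1, fun ε hε => ?_⟩
  set K : ℝ≥0∞ := ENNReal.ofReal (√2 ^ (1 / θ)) ^ s * ENNReal.ofReal √2 ^ t
  have hK₀ : K ≠ 0 := by positivity
  have hK : K ≠ ⊤ := by have := hs.1; have := ht.1; finiteness
  obtain ⟨δE, hδE, hE⟩ := hs.2 1 one_pos
  obtain ⟨δF, hδF, hF⟩ := ht.2 (ε / K.toReal) (div_pos hε (ENNReal.toReal_pos hK₀ hK))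
  refine ⟨min (√2 * δE) (min δF 1), by positivity, fun δ hδ hδle => ?_⟩
  simp only [le_min_iff] at hδle
  obtain ⟨ι, _, U, hU, hUdiam, hUsum⟩ := iCov_iff.1 (hE (δ / √2) (by positivity)
    (by rw [div_le_iff₀ (by positivity), mul_comm]; exact hδle.1))
  choose d hUd hd₀ hd₁ using fun i => exists_ediam_eq_ofReal (by positivity) (hUdiam i)
  choose r hr₀ hrδ hlo hhi hrD hdD using fun i =>
    exists_scale_hypot_mem_Icc hθ₀ hθ₁ hδ hδle.2.2 (hd₀ i) (hd₁ i)
  have hprod : ∀ i (V : Set Y), ediam V = ENNReal.ofReal (r i) →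
      (ENNReal.ofReal (δ ^ (1 / θ)) ≤ ediam (WithLp.ofLp ⁻¹' U i ×ˢ V : Set (WithLp 2 (X × Y))) ∧
        ediam (WithLp.ofLp ⁻¹' U i ×ˢ V : Set (WithLp 2 (X × Y))) ≤ ENNReal.ofReal δ) ∧
      ediam (WithLp.ofLp ⁻¹' U i ×ˢ V : Set (WithLp 2 (X × Y))) ^ (s + t) ≤
        K * ediam (U i) ^ s * ediam V ^ t := by
    intro i V hV
    have hd_pos : 0 < d i := (by positivity : 0 < (δ / √2) ^ (1 / θ)).trans_le (hd₀ i)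
    rw [ediam_preimage_ofLp_prod_eq_ofReal hd_pos (hr₀ i) (hUd i) hV]
    refine ⟨⟨ENNReal.ofReal_le_ofReal (hlo i), ENNReal.ofReal_le_ofReal (hhi i)⟩, ?_⟩
    refine ENNReal.rpow_add_le_mul_rpow_mul_rpow hs.1 ht.1 ?_ ?_
    · rw [hUd i, ← ENNReal.ofReal_mul (by positivity)]
      exact ENNReal.ofReal_le_ofReal (hdD i)
    · rw [hV, ← ENNReal.ofReal_mul (by positivity)]
      exact ENNReal.ofReal_le_ofReal (hrD i)
  obtain ⟨κ, _, W, hW, hWdiam, hWsum⟩ := exists_cover_preimage_ofLp_prod hU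
    (fun i => hF (r i) (hr₀ i) ((hrδ i).trans hδle.2.1)) (fun i => K * ediam (U i) ^ s)
    (fun W => ENNReal.ofReal (δ ^ (1 / θ)) ≤ ediam W ∧ ediam W ≤ ENNReal.ofReal δ) hprod
  refine iCov_iff.2 ⟨κ, inferInstance, W, hW, hWdiam,
    hWsum.trans (ENNReal.ofReal_div_toReal_mul_le ε hK₀ hK ?_)⟩
  calc ∑' i, K * ediam (U i) ^ s = K * ∑' i, ediam (U i) ^ s := ENNReal.tsum_mul_left
    _ ≤ K * 1 := by gcongr; simpa using hUsum
    _ = K := mul_one K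

lemma pos_of_mem_hausdorffExponents {E : Set X} (hE : E.Nonempty) {s : ℝ}
    (hs : s ∈ hausdorffExponents E) : 0 < s := by
  refine hs.1.lt_of_ne fun hs₀ => ?_
  obtain ⟨ι, _, U, hU, hsum⟩ := hCov_iff.1 (hs.2 (1 / 2) (by norm_num))
  obtain ⟨i, -⟩ := mem_iUnion.1 (hU hE.some_mem)
  have : (1 : ℝ≥0∞) ≤ ENNReal.ofReal (1 / 2) := by
    simpa [← hs₀] using (ENNReal.le_tsum i).trans hsum
  norm_num [ENNReal.one_le_ofReal] at this

lemma add_mem_hausdorffExponents_preimage_ofLp_prod {E : Set X} {F : Set Y} {s t : ℝ}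
    (hs₀ : 0 < s) (hs : s ∈ hausdorffExponents E) (ht : t ∈ upperBoxExponents F) :
    s + t ∈ hausdorffExponents (WithLp.ofLp ⁻¹' E ×ˢ F : Set (WithLp 2 (X × Y))) := by
  refine ⟨add_nonneg hs.1 ht.1, fun ε hε => ?_⟩
  set K : ℝ≥0∞ := ENNReal.ofReal √2 ^ s * ENNReal.ofReal √2 ^ t
  have hK₀ : 2 * K ≠ 0 := by positivity
  have hK : 2 * K ≠ ⊤ := by have := hs.1; have := ht.1; finiteness
  obtain ⟨δF, hδF, hF⟩ := ht.2 (ε / (2 * K).toReal) (div_pos hε (ENNReal.toReal_pos hK₀ hK))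
  set β := min δF 1
  have hβ : 0 < β := by positivity
  obtain ⟨ι, _, U, hU, hUsum⟩ := hCov_iff.1 (hs.2 (β ^ s) (by positivity))
  rw [← ENNReal.ofReal_rpow_of_nonneg hβ.le hs.1] at hUsum
  obtain ⟨r, hr, hrsum⟩ := exists_pos_radii_of_tsum_rpow_le hs₀ hβ hUsum
  have hprod : ∀ i (V : Set Y), ediam V = ENNReal.ofReal (r i) →
      True ∧ ediam (WithLp.ofLp ⁻¹' U i ×ˢ V : Set (WithLp 2 (X × Y))) ^ (s + t) ≤
        K * ENNReal.ofReal (r i) ^ s * ediam V ^ t := by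
    intro i V hV
    have hW := ediam_preimage_ofLp_prod_le (hr i).2.2 hV.le
    exact ⟨trivial, ENNReal.rpow_add_le_mul_rpow_mul_rpow hs.1 ht.1 hW (hV ▸ hW)⟩
  obtain ⟨κ, _, W, hW, -, hWsum⟩ := exists_cover_preimage_ofLp_prod hU
    (fun i => hF (r i) (hr i).1 ((hr i).2.1.trans (min_le_left _ _)))
    (fun i => K * ENNReal.ofReal (r i) ^ s) (fun _ => True) hprod
  refine hCov_iff.2 ⟨κ, inferInstance, W, hW,
    hWsum.trans (ENNReal.ofReal_div_toReal_mul_le ε hK₀ hK ?_)⟩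
  have hβ₁ : ENNReal.ofReal β ^ s ≤ 1 :=
    ENNReal.rpow_le_one (ENNReal.ofReal_le_one.2 (min_le_right _ _)) hs.1
  calc ∑' i, K * ENNReal.ofReal (r i) ^ s = K * ∑' i, ENNReal.ofReal (r i) ^ s :=
        ENNReal.tsum_mul_left
    _ ≤ K * (2 * 1) := by gcongr; exact hrsum.trans (by gcongr)
    _ = 2 * K := by ring

theorem upperIDim_preimage_ofLp_prod_le {E : Set X} {F : Set Y} (hE : E.Nonempty)
    (hE' : (upperBoxExponents E).Nonempty) (hF : (upperBoxExponents F).Nonempty) {θ : ℝ}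
    (hθ : θ ∈ Icc (0 : ℝ) 1) :
    upperIDim (WithLp.ofLp ⁻¹' E ×ˢ F : Set (WithLp 2 (X × Y))) θ ≤
      upperIDim E θ + upperBoxDim F := by
  rw [upperBoxDim_eq_sInf]
  rcases hθ.1.eq_or_lt with rfl | hθ₀
  · rw [upperIDim_zero, upperIDim_zero]
    refine sInf_le_sInf_add_sInf (bddBelow_hausdorffExponents _)
      (hE'.mono (upperBoxExponents_subset_hausdorffExponents E)) (bddBelow_hausdorffExponents E)
      hF (bddBelow_upperBoxExponents F) (add_subset_iff.2 fun s hs t ht => ?_)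
    exact add_mem_hausdorffExponents_preimage_ofLp_prod (pos_of_mem_hausdorffExponents hE hs) hs ht
  · rw [upperIDim_of_ne_zero _ hθ₀.ne', upperIDim_of_ne_zero _ hθ₀.ne']
    exact sInf_le_sInf_add_sInf (bddBelow_upperIDimExponents _ _)
      (hE'.mono (upperBoxExponents_subset_upperIDimExponents E hθ₀ hθ.2))
      (bddBelow_upperIDimExponents E θ) hF (bddBelow_upperBoxExponents F)
      (add_subset_iff.2 fun s hs t ht =>
        add_mem_upperIDimExponents_preimage_ofLp_prod hθ₀ hθ.2 hs ht)

lemma upperIDim_preimage_ofLp_prod_of_unique_right [Unique Y] (E : Set X) {F : Set Y}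
    (hF : F.Nonempty) (θ : ℝ) :
    upperIDim (WithLp.ofLp ⁻¹' E ×ˢ F : Set (WithLp 2 (X × Y))) θ = upperIDim E θ := by
  have hP : IsometryEquiv.withLpProdUnique 2 X Y '' (WithLp.ofLp ⁻¹' E ×ˢ F) = E := by
    ext x
    refine ⟨fun ⟨z, hz, hzx⟩ => hzx ▸ hz.1, fun hx => ?_⟩
    obtain ⟨y, hy⟩ := hF
    exact ⟨WithLp.toLp 2 (x, y), ⟨hx, hy⟩, rfl⟩
  rw [← upperIDim_image_isometryEquiv (IsometryEquiv.withLpProdUnique 2 X Y), hP]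

lemma upperIDim_preimage_ofLp_prod_of_unique_left [Unique X] {E : Set X} (hE : E.Nonempty)
    (F : Set Y) (θ : ℝ) :
    upperIDim (WithLp.ofLp ⁻¹' E ×ˢ F : Set (WithLp 2 (X × Y))) θ = upperIDim F θ := by
  have hP : IsometryEquiv.withLpUniqueProd 2 X Y '' (WithLp.ofLp ⁻¹' E ×ˢ F) = F := by
    ext y
    refine ⟨fun ⟨z, hz, hzy⟩ => hzy ▸ hz.2, fun hy => ?_⟩
    obtain ⟨x, hx⟩ := hE
    exact ⟨WithLp.toLp 2 (x, y), ⟨hx, hy⟩, rfl⟩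
  rw [← upperIDim_image_isometryEquiv (IsometryEquiv.withLpUniqueProd 2 X Y), hP]

end Product

theorem stmt14 (n m : ℕ) (E : Set (EuclideanSpace ℝ (Fin n))) (F : Set (EuclideanSpace ℝ (Fin m)))
    (hE : Bornology.IsBounded E) (hF : Bornology.IsBounded F)
    (θ : ℝ) (hθ : θ ∈ Set.Icc (0:ℝ) 1) :
    upperIDim {z : WithLp 2 (EuclideanSpace ℝ (Fin n) × EuclideanSpace ℝ (Fin m)) |
        (WithLp.equiv 2 _ z).1 ∈ E ∧ (WithLp.equiv 2 _ z).2 ∈ F} θ ≤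
      upperIDim E θ + upperBoxDim F := by
  change upperIDim (WithLp.ofLp ⁻¹' E ×ˢ F : Set (WithLp 2 _)) θ ≤ _
  have hRHS := add_nonneg (upperIDim_nonneg E θ) (upperBoxDim_nonneg F)
  rcases E.eq_empty_or_nonempty with rfl | hE₀
  · simpa [upperIDim_empty] using hRHS
  rcases F.eq_empty_or_nonempty with rfl | hF₀
  · simpa [upperIDim_empty] using hRHS
  -- No subset of `ℝ⁰` has positive diameter, so there the exponent sets of `upperIDim` and
  -- `upperBoxDim` may be empty, with infimum `0`; the product is isometric to the other factor.
  obtain rfl | hm := m.eq_zero_or_pos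
  · rw [upperIDim_preimage_ofLp_prod_of_unique_right E hF₀]
    linarith [upperBoxDim_nonneg F]
  have hFbox : (upperBoxExponents F).Nonempty := ⟨_, add_one_mem_upperBoxExponents hm hF⟩
  obtain rfl | hn := n.eq_zero_or_pos
  · rw [upperIDim_preimage_ofLp_prod_of_unique_left hE₀]
    linarith [upperIDim_le_upperBoxDim hFbox hθ, upperIDim_nonneg E θ]
  exact upperIDim_preimage_ofLp_prod_le hE₀ ⟨_, add_one_mem_upperBoxExponents hn hE⟩ hFbox hθ
end

section
/- For p > 0 let F_p = {0} ∪ {k^{-p} : k ∈ ℕ, k ≥ 1} ⊆ ℝ. Then for every θ ∈ [0,1], the lower and upper θ-intermediate dimensions of F_p both equal θ/(p+θ). -/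
/-!
For `s > θ/(p+θ)` and `T = δ^(p/(p+θ))`, the points `k^(-p) > T` are fewer than `T^(-1/p) + 1`;
covering each of them by an interval of length `δ^(1/θ)` and `[0, T]` by intervals of length `δ`
costs `O(δ^(s - θ/(p+θ)) + δ^s + δ^((s - θ/(p+θ))/θ) + δ^(s/θ)) → 0`.

For `s < θ/(p+θ)` pick `s/θ < b < (1-s)/p` and `K = ⌊δ^(-b)⌋`. The `K` points `k^(-p)` with
`K < k ≤ 2K` are `p (2K)^(-p-1)`-separated (mean value theorem), so a set of diameter
`r ∈ [δ^(1/θ), δ]` contains at most `1 + r (2K)^(p+1)/p ≤ r^s (δ^(-s/θ) + δ^(1-s) (2K)^(p+1)/p)`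
of them. The choice of `b` makes the bracket at most `δ^(-b) < 2K`, so every admissible cover has
`∑ |U_i|^s > 1/2`. For `θ = 0` the set is countable, hence covered by singletons.
-/

open Set

/-- The set `{0} ∪ {k ^ (-p) : k ∈ ℕ, k ≥ 1}`. -/
noncomputable def Fp (p : ℝ) : Set ℝ :=
  insert 0 {x : ℝ | ∃ k : ℕ, 1 ≤ k ∧ x = (k : ℝ) ^ (-p)}

open Filter Topology
open scoped ENNReal Finset

lemma csInf_eq_of_subset_Ici_of_Ioi_subset {S : Set ℝ} {t : ℝ} (hS : S ⊆ Ici t)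
    (ht : Ioi t ⊆ S) : sInf S = t :=
  csInf_eq_of_forall_ge_of_forall_gt_exists_lt ⟨t + 1, ht (by simp)⟩ hS fun w hw =>
    ⟨(t + w) / 2, ht (show t < (t + w) / 2 by linarith), by linarith⟩

lemma eventually_nhdsGT_zero_iff_exists_le {P : ℝ → Prop} :
    (∀ᶠ δ in 𝓝[>] 0, P δ) ↔ ∃ δ₀ > 0, ∀ δ : ℝ, 0 < δ → δ ≤ δ₀ → P δ := by
  simp [(nhdsGT_basis_Ioc (0 : ℝ)).eventually_iff]

lemma frequently_nhdsGT_zero_iff_forall_exists_le {P : ℝ → Prop} :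
    (∃ᶠ δ in 𝓝[>] 0, P δ) ↔ ∀ δ₀ > 0, ∃ δ : ℝ, 0 < δ ∧ δ ≤ δ₀ ∧ P δ := by
  simp [(nhdsGT_basis_Ioc (0 : ℝ)).frequently_iff, and_assoc]

lemma tendsto_rpow_nhdsGT_zero {e : ℝ} (he : 0 < e) :
    Tendsto (fun δ : ℝ => δ ^ e) (𝓝[>] 0) (𝓝 0) :=
  (tendsto_nhdsWithin_of_tendsto_nhds tendsto_id).rpow_const_nhds_zero he

lemma HCov_of_countable {X : Type} [PseudoEMetricSpace X] {F : Set X} (hF : F.Countable)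
    {s : ℝ} (hs : 0 < s) (ε : ℝ) : HCov F s ε := by
  have : Countable F := hF.to_subtype
  refine ⟨F, inferInstance, fun x => {x.1}, fun x hx => mem_iUnion.mpr ⟨⟨x, hx⟩, rfl⟩, ?_⟩
  simp [EMetric.diam, ENNReal.zero_rpow_of_pos hs]

lemma iDim_zero_of_countable {X : Type} [PseudoEMetricSpace X] {F : Set X}
    (hF : F.Countable) : lowerIDim F 0 = 0 ∧ upperIDim F 0 = 0 := by
  have h : sInf {s : ℝ | 0 ≤ s ∧ ∀ ε > 0, HCov F s ε} = 0 :=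
    csInf_eq_of_subset_Ici_of_Ioi_subset (fun s hs => hs.1)
      fun s hs => ⟨le_of_lt hs, fun ε _ => HCov_of_countable hF hs ε⟩
  simp [lowerIDim, upperIDim, h]

lemma iDim_eq_of_eventually {X : Type} [PseudoEMetricSpace X] {F : Set X} {θ t : ℝ}
    (hθ : θ ≠ 0) (ht : 0 ≤ t)
    (hcover : ∀ s > t, ∀ ε > 0, ∀ᶠ δ in 𝓝[>] 0, ICov F s (δ ^ (1 / θ)) δ ε)
    (hnocover : ∀ s, 0 ≤ s → s < t →
      ∃ ε > 0, ∀ᶠ δ in 𝓝[>] 0, ¬ ICov F s (δ ^ (1 / θ)) δ ε) :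
    lowerIDim F θ = t ∧ upperIDim F θ = t := by
  simp only [lowerIDim, upperIDim, if_neg hθ, ← eventually_nhdsGT_zero_iff_exists_le,
    ← frequently_nhdsGT_zero_iff_forall_exists_le]
  have hlower : {s | 0 ≤ s ∧ ∀ ε > 0, ∃ᶠ δ in 𝓝[>] 0, ICov F s (δ ^ (1 / θ)) δ ε} ⊆ Ici t := by
    rintro s ⟨hs0, hs⟩
    by_contra hst
    obtain ⟨ε, hε, hno⟩ := hnocover s hs0 (not_le.mp hst)
    obtain ⟨δ, hcov, hnot⟩ := ((hs ε hε).and_eventually hno).exists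
    exact hnot hcov
  have hupper : Ioi t ⊆ {s | 0 ≤ s ∧ ∀ ε > 0, ∀ᶠ δ in 𝓝[>] 0, ICov F s (δ ^ (1 / θ)) δ ε} :=
    fun s hs => ⟨ht.trans (le_of_lt hs), hcover s hs⟩
  have hmono : {s | 0 ≤ s ∧ ∀ ε > 0, ∀ᶠ δ in 𝓝[>] 0, ICov F s (δ ^ (1 / θ)) δ ε} ⊆
      {s | 0 ≤ s ∧ ∀ ε > 0, ∃ᶠ δ in 𝓝[>] 0, ICov F s (δ ^ (1 / θ)) δ ε} :=
    fun s hs => ⟨hs.1, fun ε hε => (hs.2 ε hε).frequently⟩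
  exact ⟨csInf_eq_of_subset_Ici_of_Ioi_subset hlower (hupper.trans hmono),
    csInf_eq_of_subset_Ici_of_Ioi_subset (hmono.trans hlower) hupper⟩

lemma Fp_countable (p : ℝ) : (Fp p).Countable :=
  ((countable_range fun k : ℕ => (k : ℝ) ^ (-p)).mono <| by
    rintro _ ⟨k, -, rfl⟩; exact ⟨k, rfl⟩).insert 0

lemma ICov_of_subset_iUnion_Icc {ι : Type} [Fintype ι] {F : Set ℝ} {s lo hi ε : ℝ}
    (a ℓ : ι → ℝ) (hF : F ⊆ ⋃ i, Icc (a i) (a i + ℓ i)) (hlo : 0 < lo)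
    (hℓ : ∀ i, lo ≤ ℓ i ∧ ℓ i ≤ hi) (hε : ∑ i, ℓ i ^ s ≤ ε) : ICov F s lo hi ε := by
  have hdiam : ∀ i, EMetric.diam (Icc (a i) (a i + ℓ i)) = ENNReal.ofReal (ℓ i) := fun i => by
    rw [EMetric.diam, Real.ediam_Icc, add_sub_cancel_left]
  refine ⟨ι, inferInstance, _, hF, fun i => ?_, ?_⟩
  · rw [hdiam]
    exact ⟨ENNReal.ofReal_le_ofReal (hℓ i).1, ENNReal.ofReal_le_ofReal (hℓ i).2⟩
  · have hℓpos : ∀ i, 0 < ℓ i := fun i => hlo.trans_le (hℓ i).1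
    simp only [hdiam, tsum_fintype, ENNReal.ofReal_rpow_of_pos (hℓpos _)]
    rw [← ENNReal.ofReal_sum_of_nonneg fun i _ => (Real.rpow_pos_of_pos (hℓpos i) s).le]
    exact ENNReal.ofReal_le_ofReal hε

lemma Icc_zero_subset_iUnion_Icc (T : ℝ) {δ : ℝ} (hδ : 0 < δ) :
    Icc 0 T ⊆ ⋃ j : Fin (⌈T / δ⌉₊ + 1), Icc ((j : ℕ) * δ) ((j : ℕ) * δ + δ) := by
  rintro x ⟨hx0, hxT⟩
  have hj : ⌊x / δ⌋₊ < ⌈T / δ⌉₊ + 1 :=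
    Nat.lt_succ_of_le <| (Nat.floor_mono (by gcongr)).trans (Nat.floor_le_ceil _)
  refine mem_iUnion.mpr ⟨⟨⌊x / δ⌋₊, hj⟩, ?_, ?_⟩
  · exact (le_div_iff₀ hδ).mp (Nat.floor_le (by positivity))
  · have := (div_lt_iff₀ hδ).mp (Nat.lt_floor_add_one (x / δ))
    dsimp only
    linarith

lemma Fp_subset_Icc_union {p T : ℝ} (hp : 0 < p) (hT : 0 < T) :
    Fp p ⊆ Icc 0 T ∪ range fun k : Fin ⌈T ^ (-p⁻¹)⌉₊ => ((k : ℕ) + 1 : ℝ) ^ (-p) := by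
  rintro _ (rfl | ⟨k, hk, rfl⟩)
  · exact Or.inl ⟨le_rfl, hT.le⟩
  by_cases hkm : k ≤ ⌈T ^ (-p⁻¹)⌉₊
  · refine Or.inr ⟨⟨k - 1, by omega⟩, ?_⟩
    simp [Nat.cast_sub hk]
  · refine Or.inl ⟨by positivity, ?_⟩
    have hk' : T ^ (-p⁻¹) ≤ k := (Nat.le_ceil _).trans (by exact_mod_cast (not_le.mp hkm).le)
    calc (k : ℝ) ^ (-p) ≤ (T ^ (-p⁻¹)) ^ (-p) :=
          Real.rpow_le_rpow_of_nonpos (by positivity) hk' (by linarith)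
      _ = T := by rw [← Real.rpow_mul hT.le, neg_mul_neg, inv_mul_cancel₀ hp.ne', Real.rpow_one]

lemma ICov_Fp {p s T δ₁ δ ε : ℝ} (hp : 0 < p) (hT : 0 < T) (hδ₁ : 0 < δ₁) (hδ₁δ : δ₁ ≤ δ)
    (hε : (T / δ + 2) * δ ^ s + (T ^ (-p⁻¹) + 1) * δ₁ ^ s ≤ ε) :
    ICov (Fp p) s δ₁ δ ε := by
  have hδ : 0 < δ := hδ₁.trans_le hδ₁δ
  refine ICov_of_subset_iUnion_Icc
    (ι := Fin (⌈T / δ⌉₊ + 1) ⊕ Fin ⌈T ^ (-p⁻¹)⌉₊)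
    (Sum.elim (fun j => (j : ℕ) * δ) fun k => ((k : ℕ) + 1 : ℝ) ^ (-p))
    (Sum.elim (fun _ => δ) fun _ => δ₁)
    ?_ hδ₁ (by rintro (j | k) <;> simp [hδ₁δ]) ?_
  · refine (Fp_subset_Icc_union hp hT).trans (union_subset ?_ ?_)
    · refine (Icc_zero_subset_iUnion_Icc T hδ).trans (iUnion_subset fun j => ?_)
      exact subset_iUnion_of_subset (Sum.inl j) subset_rfl
    · rintro _ ⟨k, rfl⟩
      exact mem_iUnion.mpr ⟨Sum.inr k, le_rfl, by simp [hδ₁.le]⟩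
  · have hn : (⌈T / δ⌉₊ : ℝ) + 1 ≤ T / δ + 2 := by
      linarith [Nat.ceil_lt_add_one (by positivity : 0 ≤ T / δ)]
    have hm : (⌈T ^ (-p⁻¹)⌉₊ : ℝ) ≤ T ^ (-p⁻¹) + 1 :=
      (Nat.ceil_lt_add_one (by positivity)).le
    simp only [Fintype.sum_sum_type, Sum.elim_inl, Sum.elim_inr, Finset.sum_const,
      Finset.card_univ, Fintype.card_fin, nsmul_eq_mul, Nat.cast_add, Nat.cast_one]
    refine le_trans ?_ hε
    gcongr

lemma eventually_ICov_Fp {p θ s ε : ℝ} (hp : 0 < p) (hθ : 0 < θ) (hθ1 : θ ≤ 1)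
    (hs : θ / (p + θ) < s) (hε : 0 < ε) :
    ∀ᶠ δ in 𝓝[>] 0, ICov (Fp p) s (δ ^ (1 / θ)) δ ε := by
  set t := θ / (p + θ) with ht
  have hs0 : 0 < s := (by positivity : 0 < t).trans hs
  have hst : 0 < s - t := sub_pos.mpr hs
  have hbound : Tendsto (fun δ : ℝ => δ ^ (s - t) + 2 * δ ^ s + δ ^ ((s - t) / θ) + δ ^ (s / θ))
      (𝓝[>] 0) (𝓝 0) := by
    simpa using (((tendsto_rpow_nhdsGT_zero hst).add
      ((tendsto_rpow_nhdsGT_zero hs0).const_mul 2)).add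
      (tendsto_rpow_nhdsGT_zero (by positivity))).add (tendsto_rpow_nhdsGT_zero (by positivity))
  filter_upwards [hbound.eventually_lt_const hε, Ioo_mem_nhdsGT one_pos] with δ hδε ⟨hδ, hδ1⟩
  have h1 : δ ^ (p / (p + θ)) / δ * δ ^ s = δ ^ (s - t) := by
    rw [← Real.rpow_sub_one hδ.ne', ← Real.rpow_add hδ, ht]
    congr 1; field_simp; ring
  have h2 : (δ ^ (p / (p + θ))) ^ (-p⁻¹) * (δ ^ (1 / θ)) ^ s = δ ^ ((s - t) / θ) := by
    rw [← Real.rpow_mul hδ.le, ← Real.rpow_mul hδ.le, ← Real.rpow_add hδ, ht]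
    congr 1; field_simp; ring
  have h3 : (δ ^ (1 / θ)) ^ s = δ ^ (s / θ) := by
    rw [← Real.rpow_mul hδ.le, one_div_mul_eq_div]
  have hT : (δ ^ (p / (p + θ)) / δ + 2) * δ ^ s
      + ((δ ^ (p / (p + θ))) ^ (-p⁻¹) + 1) * (δ ^ (1 / θ)) ^ s
      = δ ^ (s - t) + 2 * δ ^ s + δ ^ ((s - t) / θ) + δ ^ (s / θ) := by
    rw [← h1, ← h2, ← h3]; ring
  refine ICov_Fp hp (by positivity) (by positivity) ?_ (hT ▸ hδε.le)
  simpa using Real.rpow_le_rpow_of_exponent_ge hδ hδ1.le (one_le_one_div hθ hθ1)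

lemma sub_mul_le_rpow_neg_sub_rpow_neg {p x y L : ℝ} (hp : 0 < p) (hx : 0 < x) (hxy : x ≤ y)
    (hyL : y ≤ L) : (y - x) * (p * L ^ (-p - 1)) ≤ x ^ (-p) - y ^ (-p) := by
  rcases hxy.eq_or_lt with rfl | hlt
  · simp
  have hderiv : ∀ c ∈ Ioo x y, HasDerivAt (fun t => t ^ (-p)) (-p * c ^ (-p - 1)) c :=
    fun c hc => Real.hasDerivAt_rpow_const (Or.inl (hx.trans hc.1).ne')
  obtain ⟨c, hc, hslope⟩ := exists_hasDerivAt_eq_slope (fun t => t ^ (-p)) _ hlt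
    (fun t ht =>
      (Real.continuousAt_rpow_const _ _ (Or.inl (hx.trans_le ht.1).ne')).continuousWithinAt)
    hderiv
  have hc0 : 0 < c := hx.trans hc.1
  have hLc : L ^ (-p - 1) ≤ c ^ (-p - 1) :=
    Real.rpow_le_rpow_of_nonpos hc0 (hc.2.le.trans hyL) (by linarith)
  rw [eq_div_iff (sub_pos.mpr hlt).ne'] at hslope
  nlinarith [mul_nonneg (mul_nonneg (sub_pos.mpr hlt).le hp.le) (sub_nonneg.mpr hLc)]

lemma ofReal_card_sub_one_mul_le_ediam {p L : ℝ} (hp : 0 < p) (hL : 0 ≤ L) {A : Finset ℕ}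
    (hA : ∀ k ∈ A, 1 ≤ k ∧ (k : ℝ) ≤ L) {U : Set ℝ} (hAU : ∀ k ∈ A, (k : ℝ) ^ (-p) ∈ U) :
    ENNReal.ofReal ((#A - 1) * (p * L ^ (-p - 1))) ≤ EMetric.diam U := by
  rcases A.eq_empty_or_nonempty with rfl | hne
  · exact (ENNReal.ofReal_of_nonpos (by simp; positivity)).trans_le zero_le
  set j := A.min' hne
  set k := A.max' hne
  have hjk : j ≤ k := A.min'_le_max' hne
  have hcard : (#A : ℝ) - 1 ≤ k - j := by
    have : #A + j ≤ k + 1 := Nat.add_le_of_le_sub (by omega) <|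
      (Finset.card_le_card fun i hi => Finset.mem_Icc.mpr ⟨A.min'_le i hi, A.le_max' i hi⟩).trans
        (Nat.card_Icc j k).le
    have : (#A : ℝ) + j ≤ k + 1 := by exact_mod_cast this
    linarith
  have hjA : j ∈ A := A.min'_mem hne
  have hkA : k ∈ A := A.max'_mem hne
  have hgap := sub_mul_le_rpow_neg_sub_rpow_neg hp (by exact_mod_cast (hA j hjA).1)
    (Nat.cast_le.mpr hjk) (hA k hkA).2
  calc ENNReal.ofReal ((#A - 1) * (p * L ^ (-p - 1)))
      ≤ ENNReal.ofReal (((k : ℝ) - j) * (p * L ^ (-p - 1))) := by gcongr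
    _ ≤ ENNReal.ofReal (dist ((j : ℝ) ^ (-p)) ((k : ℝ) ^ (-p))) :=
      ENNReal.ofReal_le_ofReal (hgap.trans (le_abs_self _))
    _ ≤ EMetric.diam U := by
      rw [← edist_dist]; exact Metric.edist_le_ediam_of_mem (hAU j hjA) (hAU k hkA)

lemma card_le_mul_tsum_of_cover {α ι X : Type*} (S : Finset α) (v : α → X) {U : ι → Set X}
    (hS : ∀ k ∈ S, v k ∈ ⋃ i, U i) (c : ℝ≥0∞) (f : ι → ℝ≥0∞)
    (hf : ∀ i, ∀ A ⊆ S, (∀ k ∈ A, v k ∈ U i) → (#A : ℝ≥0∞) ≤ c * f i) :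
    (#S : ℝ≥0∞) ≤ c * ∑' i, f i := by
  classical
  rcases S.eq_empty_or_nonempty with rfl | ⟨k₀, hk₀⟩
  · simp
  have : Nonempty ι := ⟨(mem_iUnion.mp (hS k₀ hk₀)).choose⟩
  choose! idx hidx using fun k hk => mem_iUnion.mp (hS k hk)
  calc (#S : ℝ≥0∞) = ∑ i ∈ S.image idx, (#{k ∈ S | idx k = i} : ℝ≥0∞) := by
        rw [Finset.card_eq_sum_card_image idx S, Nat.cast_sum]
    _ ≤ ∑ i ∈ S.image idx, c * f i := Finset.sum_le_sum fun i _ =>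
        hf i _ (Finset.filter_subset _ S) fun k hk => by
          obtain ⟨hkS, rfl⟩ := Finset.mem_filter.mp hk
          exact hidx k hkS
    _ ≤ c * ∑' i, f i := by
        rw [← Finset.mul_sum]; gcongr; exact ENNReal.sum_le_tsum _

lemma one_add_div_le_rpow_mul {lo r hi s g : ℝ} (hlo : 0 < lo) (hlor : lo ≤ r) (hrhi : r ≤ hi)
    (hs0 : 0 ≤ s) (hs1 : s ≤ 1) (hg : 0 < g) :
    1 + r / g ≤ r ^ s * (lo ^ (-s) + hi ^ (1 - s) / g) := by
  have hr : 0 < r := hlo.trans_le hlor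
  have h1 : 1 ≤ r ^ s * lo ^ (-s) := by
    rw [Real.rpow_neg hlo.le, ← div_eq_mul_inv, one_le_div (by positivity)]
    exact Real.rpow_le_rpow hlo.le hlor hs0
  have h2 : r ≤ r ^ s * hi ^ (1 - s) :=
    calc r = r ^ s * r ^ (1 - s) := by rw [← Real.rpow_add hr, add_sub_cancel, Real.rpow_one]
      _ ≤ r ^ s * hi ^ (1 - s) := by gcongr
  rw [mul_add, ← mul_div_assoc]
  gcongr

lemma card_le_ofReal_mul_ediam_rpow {p s lo hi L : ℝ} (hp : 0 < p) (hL : 0 < L) (hlo : 0 < lo)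
    (hs0 : 0 ≤ s) (hs1 : s ≤ 1) {A : Finset ℕ} (hA : ∀ k ∈ A, 1 ≤ k ∧ (k : ℝ) ≤ L) {U : Set ℝ}
    (hAU : ∀ k ∈ A, (k : ℝ) ^ (-p) ∈ U)
    (hU : ENNReal.ofReal lo ≤ EMetric.diam U ∧ EMetric.diam U ≤ ENNReal.ofReal hi) :
    (#A : ℝ≥0∞) ≤
      ENNReal.ofReal (lo ^ (-s) + hi ^ (1 - s) / (p * L ^ (-p - 1))) * EMetric.diam U ^ s := by
  have hg : 0 < p * L ^ (-p - 1) := by positivity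
  have hspacing := ofReal_card_sub_one_mul_le_ediam hp hL.le hA hAU
  obtain ⟨r, hr0, hdU⟩ : ∃ r, 0 ≤ r ∧ EMetric.diam U = ENNReal.ofReal r :=
    ⟨_, ENNReal.toReal_nonneg,
      (ENNReal.ofReal_toReal (ne_top_of_le_ne_top ENNReal.ofReal_ne_top hU.2)).symm⟩
  rw [hdU] at hU hspacing ⊢
  have hlor : lo ≤ r := (ENNReal.ofReal_le_ofReal_iff hr0).mp hU.1
  have hr : 0 < r := hlo.trans_le hlor
  have hrhi : r ≤ hi := (ENNReal.ofReal_le_ofReal_iff'.mp hU.2).resolve_right (not_le.mpr hr)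
  have hcard : (#A : ℝ) ≤ 1 + r / (p * L ^ (-p - 1)) := by
    have := (le_div_iff₀ hg).mpr ((ENNReal.ofReal_le_ofReal_iff hr.le).mp hspacing)
    linarith
  have hhi : 0 < hi := hr.trans_le hrhi
  rw [ENNReal.ofReal_rpow_of_pos hr, ← ENNReal.ofReal_mul (by positivity),
    ← ENNReal.ofReal_natCast]
  exact ENNReal.ofReal_le_ofReal <| mul_comm (r ^ s) _ ▸
    hcard.trans (one_add_div_le_rpow_mul hlo hlor hrhi hs0 hs1 hg)

lemma card_le_of_ICov_Fp {p s lo hi ε : ℝ} (hp : 0 < p) (hlo : 0 < lo) (hs0 : 0 ≤ s)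
    (hs1 : s ≤ 1) (hε : 0 ≤ ε) {K : ℕ} (hK : 0 < K) (hcov : ICov (Fp p) s lo hi ε) :
    (K : ℝ) ≤ (lo ^ (-s) + hi ^ (1 - s) / (p * (2 * K : ℝ) ^ (-p - 1))) * ε := by
  obtain ⟨ι, -, U, hFU, hdiam, hsum⟩ := hcov
  have hcount := card_le_mul_tsum_of_cover (U := U) (Finset.Icc (K + 1) (2 * K))
    (fun k : ℕ => (k : ℝ) ^ (-p)) (fun k hk => hFU (Or.inr ⟨k, by grind, rfl⟩)) _ _
    fun i A hA hAU => card_le_ofReal_mul_ediam_rpow (L := 2 * K) hp (by positivity) hlo hs0 hs1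
      (fun k hk => have := Finset.mem_Icc.mp (hA hk); ⟨by omega, by exact_mod_cast this.2⟩)
      hAU (hdiam i)
  rw [Nat.card_Icc, show 2 * K + 1 - (K + 1) = K by omega] at hcount
  have := hcount.trans (mul_le_mul_of_nonneg_left hsum zero_le)
  rw [← ENNReal.ofReal_mul' hε, ← ENNReal.ofReal_natCast] at this
  exact (ENNReal.ofReal_le_ofReal_iff'.mp this).resolve_right (by simpa using hK.ne')

lemma eventually_not_ICov_Fp {p θ s : ℝ} (hp : 0 < p) (hθ : 0 < θ) (hs0 : 0 ≤ s)
    (hs : s < θ / (p + θ)) : ∀ᶠ δ in 𝓝[>] 0, ¬ ICov (Fp p) s (δ ^ (1 / θ)) δ (1 / 2) := by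
  have hs1 : s < 1 := hs.trans_le (div_le_one_of_le₀ (by linarith) (by positivity))
  have hwindow : s / θ < (1 - s) / p := by
    rw [div_lt_div_iff₀ hθ hp]
    nlinarith [(lt_div_iff₀ (by positivity : 0 < p + θ)).mp hs]
  obtain ⟨b, hvb, hub⟩ : ∃ b, s / θ < b ∧ b * p < 1 - s :=
    ⟨(s / θ + (1 - s) / p) / 2, by linarith, by rw [← lt_div_iff₀ hp]; linarith⟩
  have hb : 0 < b := lt_of_le_of_lt (by positivity) hvb
  filter_upwards [self_mem_nhdsWithin,
    (tendsto_rpow_nhdsGT_zero hb).eventually_le_const one_half_pos,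
    (tendsto_rpow_nhdsGT_zero (sub_pos.mpr hvb)).eventually_le_const one_half_pos,
    ((tendsto_rpow_nhdsGT_zero (sub_pos.mpr hub)).const_mul (2 ^ (p + 1) / p)).eventually_le_const
      (by norm_num : (2 : ℝ) ^ (p + 1) / p * 0 < 1 / 2)] with δ hδ hδb hδv hδu hcov
  have hδ : 0 < δ := hδ
  set X := δ ^ (-b) with hX
  have hX2 : 2 ≤ X := by
    rw [hX, Real.rpow_neg hδ.le, le_inv_comm₀ two_pos (by positivity)]
    linarith
  set K := ⌊X⌋₊
  have hK : X < 2 * K := by linarith [Nat.sub_one_lt_floor X]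
  have hKpos : 0 < K := by exact_mod_cast (by linarith : (0 : ℝ) < K)
  have hlo : (δ ^ (1 / θ)) ^ (-s) = δ ^ (b - s / θ) * X := by
    rw [← Real.rpow_mul hδ.le, hX, ← Real.rpow_add hδ]
    congr 1; ring
  have hhi : δ ^ (1 - s) / (p * (2 * K : ℝ) ^ (-p - 1)) ≤
      2 ^ (p + 1) / p * δ ^ (1 - s - b * p) * X :=
    calc δ ^ (1 - s) / (p * (2 * K : ℝ) ^ (-p - 1))
      _ = δ ^ (1 - s) * (2 * K : ℝ) ^ (p + 1) / p := by
          rw [show -p - 1 = -(p + 1) by ring, Real.rpow_neg (by positivity)]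
          field_simp
      _ ≤ δ ^ (1 - s) * (2 * X) ^ (p + 1) / p := by gcongr; exact Nat.floor_le (by positivity)
      _ = 2 ^ (p + 1) / p * δ ^ (1 - s - b * p) * X := by
          have : δ ^ (1 - s) * δ ^ (-b * (p + 1)) = δ ^ (1 - s - b * p) * X := by
            rw [hX, ← Real.rpow_add hδ, ← Real.rpow_add hδ]
            congr 1; ring
          rw [Real.mul_rpow two_pos.le (by positivity), hX, ← Real.rpow_mul hδ.le]
          linear_combination 2 ^ (p + 1) / p * this
  have hcard := card_le_of_ICov_Fp hp (by positivity) hs0 hs1.le (by norm_num) hKpos hcov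
  rw [hlo] at hcard
  have hX0 : 0 ≤ X := by positivity
  linarith [mul_le_mul_of_nonneg_right hδv hX0, mul_le_mul_of_nonneg_right hδu hX0]

theorem stmt15 (p : ℝ) (hp : 0 < p) (θ : ℝ) (hθ : θ ∈ Set.Icc (0:ℝ) 1) :
    lowerIDim (Fp p) θ = θ / (p + θ) ∧ upperIDim (Fp p) θ = θ / (p + θ) := by
  obtain ⟨hθ0, hθ1⟩ := hθ
  rcases hθ0.eq_or_lt with rfl | hθ
  · simpa using iDim_zero_of_countable (Fp_countable p)
  · exact iDim_eq_of_eventually hθ.ne' (by positivity)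
      (fun s hs ε hε => eventually_ICov_Fp hp hθ hθ1 hs hε)
      fun s hs0 hs => ⟨1 / 2, by norm_num, eventually_not_ICov_Fp hp hθ hs0 hs⟩
end

section
/- Intermediate dimensions are invariant under bi-Lipschitz maps: if f : ℝⁿ → ℝᵐ is bi-Lipschitz onto its image and F ⊆ ℝⁿ is bounded, then for every θ ∈ [0,1] the lower (resp. upper) θ-intermediate dimension of f(F) equals that of F. -/
open Set

/-!
The image under an `L`-Lipschitz map of a cover at scale `δ` is turned into a cover at scale
`2Lδ` by replacing each image set with a closed ball around one of its points, of radius large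
enough for the new lower cutoff `(2Lδ)^(1/θ)`. Since the original set had diameter at least
`δ^(1/θ)`, this costs at most a factor `(2L)^(s/θ)` in the `s`-sum, so every exponent admissible
for `F` is admissible for its image. Applying this to `f` and to its Lipschitz inverse on `f(F)`
gives equality. Sets with at most one point have all intermediate dimensions `0`; otherwise both
ambient spaces are nontrivial, so that balls of every diameter exist.
-/

set_option linter.deprecated false

open Set Metric ENNReal
open scoped NNReal

lemma Real.sInf_eq_zero_of_subset_Ici {S : Set ℝ} (h0 : S ⊆ Ici 0)
    (hpos : S.Nonempty → Ioi 0 ⊆ S) : sInf S = 0 := by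
  rcases S.eq_empty_or_nonempty with rfl | hne
  · exact Real.sInf_empty
  refine le_antisymm ?_ (le_csInf hne fun x hx => h0 hx)
  have := csInf_le_csInf ⟨0, fun x hx => h0 hx⟩ nonempty_Ioi (hpos hne)
  rwa [csInf_Ioi] at this

section Subsingleton

variable {X : Type} [PseudoEMetricSpace X] {F : Set X}

lemma ICov.of_subsingleton (hF : F.Subsingleton) {s lo hi ε : ℝ} (h : ICov F s lo hi ε)
    {t ε' : ℝ} (ht : 0 ≤ t) (hhi : 0 ≤ hi) (hε' : hi ^ t ≤ ε') : ICov F t lo hi ε' := by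
  obtain ⟨ι, _, U, hcov, hdiam, -⟩ := h
  rcases hF.eq_empty_or_singleton with rfl | ⟨y, rfl⟩
  · exact ⟨Empty, inferInstance, Empty.elim, empty_subset _, fun i => i.elim, by simp⟩
  obtain ⟨i, hyU⟩ := mem_iUnion.1 (hcov rfl)
  refine ⟨Unit, inferInstance, fun _ => U i, singleton_subset_iff.2 (mem_iUnion.2 ⟨(), hyU⟩),
    fun _ => hdiam i, ?_⟩
  calc ∑' _ : Unit, EMetric.diam (U i) ^ t = EMetric.diam (U i) ^ t := by simp
    _ ≤ ENNReal.ofReal hi ^ t := rpow_le_rpow (hdiam i).2 ht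
    _ ≤ ENNReal.ofReal ε' := by
      rw [ofReal_rpow_of_nonneg hhi ht]; exact ofReal_le_ofReal hε'

lemma HCov.of_subsingleton (hF : F.Subsingleton) {s : ℝ} (hs : 0 < s) (ε : ℝ) : HCov F s ε :=
  ⟨Unit, inferInstance, fun _ => F, fun x hx => mem_iUnion.2 ⟨(), hx⟩, by
    simp [EMetric.diam, hF.ediam_eq, zero_rpow_of_pos hs]⟩

lemma lowerIDim_of_subsingleton (hF : F.Subsingleton) (θ : ℝ) : lowerIDim F θ = 0 := by
  unfold lowerIDim
  split_ifs
  · exact Real.sInf_eq_zero_of_subset_Ici (fun s hs => hs.1)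
      fun _ s hs => ⟨hs.le, fun ε _ => HCov.of_subsingleton hF hs ε⟩
  refine Real.sInf_eq_zero_of_subset_Ici (fun s hs => hs.1) ?_
  rintro ⟨s₀, -, hs₀⟩ t ht
  refine ⟨ht.le, fun ε hε δ₀ hδ₀ => ?_⟩
  obtain ⟨δ, hδ, hδle, hcov⟩ := hs₀ 1 one_pos (min δ₀ (ε ^ t⁻¹)) (by positivity)
  refine ⟨δ, hδ, hδle.trans (min_le_left _ _), hcov.of_subsingleton hF ht.le hδ.le ?_⟩
  exact (Real.le_rpow_inv_iff_of_pos hδ.le hε.le ht).1 (hδle.trans (min_le_right _ _))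

lemma upperIDim_of_subsingleton (hF : F.Subsingleton) (θ : ℝ) : upperIDim F θ = 0 := by
  unfold upperIDim
  split_ifs
  · exact Real.sInf_eq_zero_of_subset_Ici (fun s hs => hs.1)
      fun _ s hs => ⟨hs.le, fun ε _ => HCov.of_subsingleton hF hs ε⟩
  refine Real.sInf_eq_zero_of_subset_Ici (fun s hs => hs.1) ?_
  rintro ⟨s₀, -, hs₀⟩ t ht
  refine ⟨ht.le, fun ε hε => ?_⟩
  obtain ⟨δ₀, hδ₀, hcov⟩ := hs₀ 1 one_pos
  refine ⟨min δ₀ (ε ^ t⁻¹), by positivity, fun δ hδ hδle => ?_⟩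
  refine (hcov δ hδ (hδle.trans (min_le_left _ _))).of_subsingleton hF ht.le hδ.le ?_
  exact (Real.le_rpow_inv_iff_of_pos hδ.le hε.le ht).1 (hδle.trans (min_le_right _ _))

end Subsingleton

lemma exists_small_of_rescale {P Q : ℝ → ℝ → Prop} {a K : ℝ} (ha : 1 ≤ a) (hK : 0 < K)
    (hPQ : ∀ δ ε, 0 < δ → a * δ ≤ 1 → P δ ε → Q (a * δ) (K * ε))
    (h : ∀ ε > 0, ∀ δ₀ > 0, ∃ δ, 0 < δ ∧ δ ≤ δ₀ ∧ P δ ε) :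
    ∀ ε > 0, ∀ δ₀ > 0, ∃ δ, 0 < δ ∧ δ ≤ δ₀ ∧ Q δ ε := by
  intro ε hε δ₀ hδ₀
  obtain ⟨δ, hδ, hδle, hP⟩ := h (ε / K) (by positivity) (min δ₀ 1 / a) (by positivity)
  have haδ : a * δ ≤ min δ₀ 1 := by rwa [le_div_iff₀' (by positivity)] at hδle
  refine ⟨a * δ, by positivity, haδ.trans (min_le_left _ _), ?_⟩
  simpa [mul_div_cancel₀ _ hK.ne'] using hPQ δ (ε / K) hδ (haδ.trans (min_le_right _ _)) hP

lemma forall_small_of_rescale {P Q : ℝ → ℝ → Prop} {a K : ℝ} (ha : 1 ≤ a) (hK : 0 < K)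
    (hPQ : ∀ δ ε, 0 < δ → a * δ ≤ 1 → P δ ε → Q (a * δ) (K * ε))
    (h : ∀ ε > 0, ∃ δ₀ > 0, ∀ δ, 0 < δ → δ ≤ δ₀ → P δ ε) :
    ∀ ε > 0, ∃ δ₀ > 0, ∀ δ, 0 < δ → δ ≤ δ₀ → Q δ ε := by
  intro ε hε
  obtain ⟨δ₀, hδ₀, hP⟩ := h (ε / K) (by positivity)
  refine ⟨min (a * δ₀) 1, by positivity, fun δ hδ hδle => ?_⟩
  have ha0 : a ≠ 0 := by positivity
  have hδa : δ / a ≤ δ₀ := by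
    rw [div_le_iff₀' (by positivity)]; exact hδle.trans (min_le_left _ _)
  have := hPQ (δ / a) (ε / K) (by positivity)
    (by rw [mul_div_cancel₀ _ ha0]; exact hδle.trans (min_le_right _ _)) (hP _ (by positivity) hδa)
  rwa [mul_div_cancel₀ _ ha0, mul_div_cancel₀ _ hK.ne'] at this

lemma max_mul_rpow_le {a θ s δ d : ℝ} (ha : 1 ≤ a) (hθ : 0 < θ) (hθ1 : θ ≤ 1) (hs : 0 ≤ s)
    (hδ : 0 < δ) (hd : δ ^ (1 / θ) ≤ d) :
    max (a * d) ((a * δ) ^ (1 / θ)) ^ s ≤ a ^ (s / θ) * d ^ s := by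
  have hd0 : 0 ≤ d := (Real.rpow_nonneg hδ.le _).trans hd
  rcases le_total (a * d) ((a * δ) ^ (1 / θ)) with h | h
  · rw [max_eq_right h, Real.mul_rpow (by positivity) hδ.le,
      Real.mul_rpow (by positivity) (by positivity), ← Real.rpow_mul (by positivity),
      one_div_mul_eq_div]
    gcongr
  · rw [max_eq_left h, Real.mul_rpow (by positivity) hd0]
    gcongr
    exact le_div_self hs hθ hθ1

lemma LipschitzOnWith.ediam_image_inter_le {X Y : Type*} [PseudoEMetricSpace X]
    [PseudoEMetricSpace Y] {φ : X → Y} {A : Set X} {L : ℝ≥0} (hφ : LipschitzOnWith L φ A)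
    (U : Set X) : ediam (φ '' (U ∩ A)) ≤ L * ediam U :=
  ediam_image_le_iff.2 fun _ hx _ hy =>
    (hφ hx.2 hy.2).trans (by gcongr; exact edist_le_ediam_of_mem hx.1 hy.1)

lemma HCov.image_of_lipschitzOnWith {X Y : Type} [PseudoEMetricSpace X] [PseudoEMetricSpace Y]
    {φ : X → Y} {A : Set X} {L : ℝ≥0} (hφ : LipschitzOnWith L φ A) {s ε : ℝ} (hs : 0 ≤ s)
    (h : HCov A s ε) : HCov (φ '' A) s ((L : ℝ) ^ s * ε) := by
  obtain ⟨ι, hι, U, hcov, hsum⟩ := h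
  refine ⟨ι, hι, fun i => φ '' (U i ∩ A), ?_, ?_⟩
  · rintro _ ⟨x, hx, rfl⟩
    obtain ⟨i, hi⟩ := mem_iUnion.1 (hcov hx)
    exact mem_iUnion.2 ⟨i, x, ⟨hi, hx⟩, rfl⟩
  calc ∑' i, EMetric.diam (φ '' (U i ∩ A)) ^ s ≤ ∑' i, (L : ℝ≥0∞) ^ s * EMetric.diam (U i) ^ s :=
        ENNReal.tsum_le_tsum fun i => by
          rw [← mul_rpow_of_nonneg _ _ hs]; exact rpow_le_rpow (hφ.ediam_image_inter_le _) hs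
    _ = (L : ℝ≥0∞) ^ s * ∑' i, EMetric.diam (U i) ^ s := ENNReal.tsum_mul_left
    _ ≤ ENNReal.ofReal ((L : ℝ) ^ s) * ENNReal.ofReal ε := by
        rw [← ofReal_coe_nnreal, ofReal_rpow_of_nonneg L.coe_nonneg hs]; gcongr
    _ = ENNReal.ofReal ((L : ℝ) ^ s * ε) := (ofReal_mul (by positivity)).symm

lemma forall_hCov_image_of_lipschitzOnWith {X Y : Type} [PseudoEMetricSpace X]
    [PseudoEMetricSpace Y] {φ : X → Y} {A : Set X} {L : ℝ≥0} (hφ : LipschitzOnWith L φ A)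
    {s : ℝ} (hs : 0 ≤ s) (h : ∀ ε > 0, HCov A s ε) : ∀ ε > 0, HCov (φ '' A) s ε := by
  intro ε hε
  have hL : (0 : ℝ) < (max L 1 : ℝ≥0) := by positivity
  have := (h (ε / (max L 1 : ℝ≥0) ^ s) (by positivity)).image_of_lipschitzOnWith
    (hφ.weaken (le_max_left L 1)) hs
  rwa [mul_div_cancel₀ _ (by positivity)] at this

section NormedSpace

variable {E : Type} [NormedAddCommGroup E] [NormedSpace ℝ E] [Nontrivial E]

lemma ediam_closedBall_eq (x : E) {r : ℝ} (hr : 0 ≤ r) :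
    ediam (closedBall x r) = ENNReal.ofReal (2 * r) := by
  rw [← diam_closedBall_eq x hr, Metric.diam, ofReal_toReal isBounded_closedBall.ediam_ne_top]

lemma exists_superset_ediam_eq (V : Set E) {r : ℝ} (hr : 0 ≤ r)
    (hV : ediam V ≤ ENNReal.ofReal r) : ∃ B, V ⊆ B ∧ ediam B = ENNReal.ofReal (2 * r) := by
  rcases V.eq_empty_or_nonempty with rfl | ⟨x, hx⟩
  · exact ⟨closedBall 0 r, empty_subset _, ediam_closedBall_eq 0 hr⟩
  refine ⟨closedBall x r, fun y hy => ?_, ediam_closedBall_eq x hr⟩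
  rw [mem_closedBall, ← edist_le_ofReal hr]
  exact (edist_le_ediam_of_mem hy hx).trans hV

lemma ICov.image_of_lipschitzOnWith {X : Type} [PseudoEMetricSpace X] {φ : X → E} {A : Set X}
    {L : ℝ≥0} (hφ : LipschitzOnWith L φ A) (hL : 1 ≤ (L : ℝ)) {s θ δ ε : ℝ} (hs : 0 ≤ s)
    (hθ : 0 < θ) (hθ1 : θ ≤ 1) (hδ : 0 < δ) (hδ1 : 2 * L * δ ≤ 1)
    (h : ICov A s (δ ^ (1 / θ)) δ ε) :
    ICov (φ '' A) s ((2 * L * δ) ^ (1 / θ)) (2 * L * δ) ((2 * L) ^ (s / θ) * ε) := by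
  obtain ⟨ι, hι, U, hcov, hdiam, hsum⟩ := h
  set lo := (2 * L * δ) ^ (1 / θ)
  set d : ι → ℝ := fun i => (ediam (U i)).toReal
  have hfin i : ediam (U i) ≠ ⊤ := ne_top_of_le_ne_top ofReal_ne_top (hdiam i).2
  have hd_lo i : δ ^ (1 / θ) ≤ d i := (ofReal_le_iff_le_toReal (hfin i)).1 (hdiam i).1
  have hd_hi i : d i ≤ δ := toReal_le_of_le_ofReal hδ.le (hdiam i).2
  have hr i : 0 ≤ max (L * d i) (lo / 2) := le_max_of_le_right (by positivity)
  have himage i : ediam (φ '' (U i ∩ A)) ≤ ENNReal.ofReal (max (L * d i) (lo / 2)) := by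
    refine (hφ.ediam_image_inter_le _).trans (le_trans ?_ (ofReal_le_ofReal (le_max_left _ _)))
    rw [ofReal_mul L.coe_nonneg, ofReal_coe_nnreal, ofReal_toReal (hfin i)]
  choose B hVB hB using fun i => exists_superset_ediam_eq _ (hr i) (himage i)
  have hB' i : ediam (B i) = ENNReal.ofReal (max (2 * L * d i) lo) := by
    rw [hB, mul_max_of_nonneg _ _ two_pos.le, mul_div_cancel₀ _ two_ne_zero, mul_assoc]
  refine ⟨ι, hι, B, ?_, fun i => ?_, ?_⟩
  · rintro _ ⟨x, hx, rfl⟩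
    obtain ⟨i, hi⟩ := mem_iUnion.1 (hcov hx)
    exact mem_iUnion.2 ⟨i, hVB i ⟨x, ⟨hi, hx⟩, rfl⟩⟩
  · simp only [EMetric.diam, hB']
    refine ⟨ofReal_le_ofReal (le_max_right _ _),
      ofReal_le_ofReal (max_le (by gcongr; exact hd_hi i) ?_)⟩
    calc lo ≤ (2 * L * δ) ^ (1 : ℝ) :=
          Real.rpow_le_rpow_of_exponent_ge (by positivity) hδ1 (by rw [le_div_iff₀ hθ]; simpa)
      _ = 2 * L * δ := Real.rpow_one _
  have hK : (0 : ℝ) ≤ (2 * L) ^ (s / θ) := by positivity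
  calc ∑' i, EMetric.diam (B i) ^ s
      ≤ ∑' i, ENNReal.ofReal ((2 * L) ^ (s / θ)) * EMetric.diam (U i) ^ s :=
        ENNReal.tsum_le_tsum fun i => by
          simp only [EMetric.diam]
          rw [hB', ← ofReal_toReal (hfin i), ofReal_rpow_of_nonneg toReal_nonneg hs,
            ofReal_rpow_of_nonneg (le_max_of_le_right (by positivity)) hs, ← ofReal_mul hK]
          exact ofReal_le_ofReal (max_mul_rpow_le (by linarith) hθ hθ1 hs hδ (hd_lo i))
    _ = ENNReal.ofReal ((2 * L) ^ (s / θ)) * ∑' i, EMetric.diam (U i) ^ s :=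
        ENNReal.tsum_mul_left
    _ ≤ ENNReal.ofReal ((2 * L) ^ (s / θ)) * ENNReal.ofReal ε := by gcongr
    _ = ENNReal.ofReal ((2 * L) ^ (s / θ) * ε) := (ofReal_mul hK).symm

variable {X : Type} [PseudoEMetricSpace X] {φ : X → E} {A : Set X} {L : ℝ≥0} {s θ : ℝ}

lemma exists_small_iCov_image_of_lipschitzOnWith (hφ : LipschitzOnWith L φ A) (hs : 0 ≤ s)
    (hθ : 0 < θ) (hθ1 : θ ≤ 1)
    (h : ∀ ε > 0, ∀ δ₀ > 0, ∃ δ, 0 < δ ∧ δ ≤ δ₀ ∧ ICov A s (δ ^ (1 / θ)) δ ε) :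
    ∀ ε > 0, ∀ δ₀ > 0, ∃ δ, 0 < δ ∧ δ ≤ δ₀ ∧ ICov (φ '' A) s (δ ^ (1 / θ)) δ ε := by
  have hL : (1 : ℝ) ≤ (max L 1 : ℝ≥0) := by simp
  exact exists_small_of_rescale (by linarith) (by positivity)
    (fun _ _ hδ hδ1 hP => hP.image_of_lipschitzOnWith (hφ.weaken (le_max_left L 1)) hL hs hθ hθ1
      hδ hδ1) h

lemma forall_small_iCov_image_of_lipschitzOnWith (hφ : LipschitzOnWith L φ A) (hs : 0 ≤ s)
    (hθ : 0 < θ) (hθ1 : θ ≤ 1)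
    (h : ∀ ε > 0, ∃ δ₀ > 0, ∀ δ, 0 < δ → δ ≤ δ₀ → ICov A s (δ ^ (1 / θ)) δ ε) :
    ∀ ε > 0, ∃ δ₀ > 0, ∀ δ, 0 < δ → δ ≤ δ₀ → ICov (φ '' A) s (δ ^ (1 / θ)) δ ε := by
  have hL : (1 : ℝ) ≤ (max L 1 : ℝ≥0) := by simp
  exact forall_small_of_rescale (by linarith) (by positivity)
    (fun _ _ hδ hδ1 hP => hP.image_of_lipschitzOnWith (hφ.weaken (le_max_left L 1)) hL hs hθ hθ1
      hδ hδ1) h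

end NormedSpace

section Bilipschitz

variable {E E' : Type} [NormedAddCommGroup E] [NormedSpace ℝ E] [Nontrivial E]
  [NormedAddCommGroup E'] [NormedSpace ℝ E'] [Nontrivial E'] {φ : E → E'} {ψ : E' → E}
  {A : Set E} {L L' : ℝ≥0} {θ : ℝ}

lemma lowerIDim_image_eq_of_leftInvOn (hφ : LipschitzOnWith L φ A)
    (hψ : LipschitzOnWith L' ψ (φ '' A)) (hψφ : LeftInvOn ψ φ A) (hθ : θ ∈ Icc 0 1) :
    lowerIDim (φ '' A) θ = lowerIDim A θ := by
  have himg : ψ '' (φ '' A) = A := hψφ.image_image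
  unfold lowerIDim
  split_ifs with hθ0
  · congr 1; ext s
    refine and_congr_right fun hs => ⟨fun h => ?_, forall_hCov_image_of_lipschitzOnWith hφ hs⟩
    simpa only [himg] using forall_hCov_image_of_lipschitzOnWith hψ hs h
  · have hθpos : 0 < θ := hθ.1.lt_of_ne' hθ0
    congr 1; ext s
    refine and_congr_right fun hs =>
      ⟨fun h => ?_, exists_small_iCov_image_of_lipschitzOnWith hφ hs hθpos hθ.2⟩
    simpa only [himg] using exists_small_iCov_image_of_lipschitzOnWith hψ hs hθpos hθ.2 h

lemma upperIDim_image_eq_of_leftInvOn (hφ : LipschitzOnWith L φ A)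
    (hψ : LipschitzOnWith L' ψ (φ '' A)) (hψφ : LeftInvOn ψ φ A) (hθ : θ ∈ Icc 0 1) :
    upperIDim (φ '' A) θ = upperIDim A θ := by
  have himg : ψ '' (φ '' A) = A := hψφ.image_image
  unfold upperIDim
  split_ifs with hθ0
  · congr 1; ext s
    refine and_congr_right fun hs => ⟨fun h => ?_, forall_hCov_image_of_lipschitzOnWith hφ hs⟩
    simpa only [himg] using forall_hCov_image_of_lipschitzOnWith hψ hs h
  · have hθpos : 0 < θ := hθ.1.lt_of_ne' hθ0
    congr 1; ext s
    refine and_congr_right fun hs =>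
      ⟨fun h => ?_, forall_small_iCov_image_of_lipschitzOnWith hφ hs hθpos hθ.2⟩
    simpa only [himg] using forall_small_iCov_image_of_lipschitzOnWith hψ hs hθpos hθ.2 h

end Bilipschitz

theorem intermediateDims_image_eq_of_bilipschitz {E E' : Type} [NormedAddCommGroup E]
    [NormedSpace ℝ E] [NormedAddCommGroup E'] [NormedSpace ℝ E'] {φ : E → E'} {K K' : ℝ≥0}
    (hφ : LipschitzWith K φ) (hφ' : AntilipschitzWith K' φ) (A : Set E) {θ : ℝ}
    (hθ : θ ∈ Icc 0 1) :
    lowerIDim (φ '' A) θ = lowerIDim A θ ∧ upperIDim (φ '' A) θ = upperIDim A θ := by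
  rcases A.subsingleton_or_nontrivial with hA | ⟨x, hx, y, hy, hxy⟩
  · simp only [lowerIDim_of_subsingleton, upperIDim_of_subsingleton, hA, hA.image φ, and_self]
  have : Nontrivial E := ⟨x, y, hxy⟩
  have : Nontrivial E' := ⟨φ x, φ y, hφ'.injective.ne hxy⟩
  have hψφ : LeftInvOn (Function.invFun φ) φ A :=
    fun x _ => Function.leftInverse_invFun hφ'.injective x
  have hψ : LipschitzOnWith K' (Function.invFun φ) (φ '' A) :=
    lipschitzOnWith_iff_restrict.2 (hφ'.to_rightInvOn hψφ.rightInvOn_image)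
  exact ⟨lowerIDim_image_eq_of_leftInvOn hφ.lipschitzOnWith hψ hψφ hθ,
    upperIDim_image_eq_of_leftInvOn hφ.lipschitzOnWith hψ hψφ hθ⟩

theorem stmt18_general (n m : ℕ) (f : EuclideanSpace ℝ (Fin n) → EuclideanSpace ℝ (Fin m))
    (c C : ℝ) (hc : 0 < c)
    (hbi : ∀ x y : EuclideanSpace ℝ (Fin n),
      c * dist x y ≤ dist (f x) (f y) ∧ dist (f x) (f y) ≤ C * dist x y)
    (F : Set (EuclideanSpace ℝ (Fin n)))
    (θ : ℝ) (hθ : θ ∈ Set.Icc (0:ℝ) 1) :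
    lowerIDim (f '' F) θ = lowerIDim F θ ∧ upperIDim (f '' F) θ = upperIDim F θ := by
  have hLip : LipschitzWith (Real.toNNReal C) f := LipschitzWith.of_dist_le' fun x y => (hbi x y).2
  have hAnti : AntilipschitzWith (Real.toNNReal c⁻¹) f :=
    AntilipschitzWith.of_le_mul_dist fun x y => by
      rw [Real.coe_toNNReal _ (inv_nonneg.2 hc.le), ← div_eq_inv_mul, le_div_iff₀' hc]
      exact (hbi x y).1
  exact intermediateDims_image_eq_of_bilipschitz hLip hAnti F hθ

theorem stmt18 (n m : ℕ) (f : EuclideanSpace ℝ (Fin n) → EuclideanSpace ℝ (Fin m))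
    (c C : ℝ) (hc : 0 < c)
    (hbi : ∀ x y : EuclideanSpace ℝ (Fin n),
      c * dist x y ≤ dist (f x) (f y) ∧ dist (f x) (f y) ≤ C * dist x y)
    (F : Set (EuclideanSpace ℝ (Fin n))) (hF : Bornology.IsBounded F)
    (θ : ℝ) (hθ : θ ∈ Set.Icc (0:ℝ) 1) :
    lowerIDim (f '' F) θ = lowerIDim F θ ∧ upperIDim (f '' F) θ = upperIDim F θ :=
  stmt18_general n m f c C hc hbi F θ hθ
end
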